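/- arXiv:math/9810012 — 3 statements merged into one kernel-verified Lean document; each statement's English description precedes it below -/
import Mathlib

section
/- For every n ≥ 1: if m ≥ 2 then D(n,m) is path-connected, and if m ≥ 3 then D(n,m) is simply connected (path-connected with trivial fundamental group). -/
/-!
A tuple lies outside `D(n,m)` exactly when its polynomials share a root `x`; given `x`, the
constant terms are determined by the remaining coefficients, so the complement of `D(n,m)` lies
in the image of a `C¹` map `Φ` from a space of codimension `m`. A family `a z + b z • w` with
`k` parameters `z` meets `range Φ` only for `w` in the image of
`(z, p) ↦ (b z)⁻¹ • (Φ p - a z)`, whose Hausdorff dimension is below the ambient one when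
`k < m`, so a generic `w` avoids it. For `m ≥ 2` the path `s ↦ (1 - s) c + s d + s (1 - s) w`
then joins `c` to `d` inside `D(n,m)`, and for `m ≥ 3` the map
`(t, s) ↦ (1 - t) r₁ s + t r₂ s + t (1 - t) s (1 - s) w` is a homotopy inside `D(n,m)` between
two `C¹` paths `r₁`, `r₂` with the same endpoints. By Weierstrass approximation, every path in
the open set `D(n,m)` is homotopic to a `C¹` one.
-/

noncomputable section

/-- Evaluation at `x` of the monic polynomial `x^n + ∑_{j<n} c_j x^j` determined by the
coefficient vector `c`. -/
def evalMonic (n : ℕ) (c : Fin n → ℝ) (x : ℝ) : ℝ :=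
  x ^ n + ∑ j : Fin n, c j * x ^ (j : ℕ)

/-- `D(n,m)`: the space of `(m+1)`-tuples of monic real polynomials of degree `n`
(recorded by their lower-order coefficient vectors, i.e. as a subspace of `ℝ^{n(m+1)}`)
having no common real root. -/
def Dspace (n m : ℕ) : Set (Fin (m + 1) → Fin n → ℝ) :=
  {c | ∀ x : ℝ, ∃ i, evalMonic n (c i) x ≠ 0}

open Set Metric Module unitInterval
open scoped ContDiff

theorem Path.Homotopic.of_continuous_mem {X : Type*} [TopologicalSpace X] {U : Set X} {x y : U}
    {p q : Path x y} (K : ℝ × ℝ → X) (hK : Continuous K) (hKU : ∀ t s : I, K (t, s) ∈ U)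
    (h0 : ∀ s : I, K (0, s) = p s) (h1 : ∀ s : I, K (1, s) = q s)
    (hx : ∀ t : I, K (t, 0) = x) (hy : ∀ t : I, K (t, 1) = y) : p.Homotopic q := by
  refine ⟨⟨⟨⟨fun z => ⟨K (z.1, z.2), hKU z.1 z.2⟩, by fun_prop⟩,
    fun s => Subtype.ext (h0 s), fun s => Subtype.ext (h1 s)⟩, ?_⟩⟩
  rintro t s (rfl | rfl)
  · exact Subtype.ext ((hx t).trans (by simp))
  · exact Subtype.ext ((hy t).trans (by simp))

section FiniteDimensional

variable {E F G : Type*} [NormedAddCommGroup E] [NormedSpace ℝ E] [FiniteDimensional ℝ E]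
  [NormedAddCommGroup F] [NormedSpace ℝ F] [NormedAddCommGroup G] [NormedSpace ℝ G]

theorem ContDiffOn.dimH_image_le_of_isOpen {f : E → F} {s : Set E} (hf : ContDiffOn ℝ 1 f s)
    (hs : IsOpen s) : dimH (f '' s) ≤ dimH s :=
  dimH_image_le_of_locally_lipschitzOn fun _ hx =>
    let ⟨C, t, ht, hC⟩ := (hf.contDiffAt (hs.mem_nhds hx)).exists_lipschitzOnWith
    ⟨C, t, mem_nhdsWithin_of_mem_nhds ht, hC⟩

theorem exists_forall_add_smul_notMem_range [FiniteDimensional ℝ F] [FiniteDimensional ℝ G]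
    {Φ : F → E} {a : G → E} {b : G → ℝ}
    (hΦ : ContDiff ℝ 1 Φ) (ha : ContDiff ℝ 1 a) (hb : ContDiff ℝ 1 b)
    (hdim : finrank ℝ G + finrank ℝ F < finrank ℝ E) :
    ∃ w : E, ∀ z, b z ≠ 0 → a z + b z • w ∉ range Φ := by
  let S : Set (G × F) := {q | b q.1 ≠ 0}
  let Θ : G × F → E := fun q => (b q.1)⁻¹ • (Φ q.2 - a q.1)
  have hS : IsOpen S := isOpen_ne_fun (hb.continuous.comp continuous_fst) continuous_const
  have hΘ : ContDiffOn ℝ 1 Θ S :=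
    ((hb.comp contDiff_fst).contDiffOn.inv fun _ hq => hq).smul
      ((hΦ.comp contDiff_snd).sub (ha.comp contDiff_fst)).contDiffOn
  have hsmall : dimH (Θ '' S) < finrank ℝ E :=
    calc dimH (Θ '' S) ≤ dimH (univ : Set (G × F)) :=
          (hΘ.dimH_image_le_of_isOpen hS).trans (dimH_mono (subset_univ S))
      _ = finrank ℝ (G × F) := Real.dimH_univ_eq_finrank _
      _ < finrank ℝ E := by rw [finrank_prod]; exact_mod_cast hdim
  obtain ⟨w, hw⟩ := (dense_compl_of_dimH_lt_finrank hsmall).nonempty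
  refine ⟨w, fun z hz ⟨p, hp⟩ => hw ⟨(z, p), hz, ?_⟩⟩
  simp [Θ, hp, hz]

theorem exists_contDiff_near_of_continuousOn {f : ℝ → E} {a b : ℝ}
    (hf : ContinuousOn f (Icc a b)) {ε : ℝ} (hε : 0 < ε) :
    ∃ r : ℝ → E, ContDiff ℝ ω r ∧ ∀ s ∈ Icc a b, dist (r s) (f s) < ε := by
  let e := Module.finBasis ℝ E
  let C := ∑ i, ‖e i‖
  have hC : 0 ≤ C := Finset.sum_nonneg fun i _ => norm_nonneg _
  have hδ : 0 < ε / (C + 1) := by positivity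
  have happrox (i) : ∃ P : Polynomial ℝ, ∀ s ∈ Icc a b,
      |P.aeval s - e.equivFunL (f s) i| < ε / (C + 1) := by
    simpa using exists_polynomial_near_of_continuousOn a b (fun s => e.equivFunL (f s) i)
      ((continuous_apply i).comp_continuousOn (e.equivFunL.continuous.comp_continuousOn hf)) _ hδ
  choose P hP using happrox
  refine ⟨fun s => ∑ i, (P i).aeval s • e i,
    ContDiff.sum fun i _ => ((P i).contDiff_aeval ω).smul contDiff_const, fun s hs => ?_⟩
  calc dist (∑ i, (P i).aeval s • e i) (f s)
      = ‖∑ i, ((P i).aeval s - e.equivFunL (f s) i) • e i‖ := by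
        conv_lhs => rw [← e.sum_repr (f s)]
        simp [dist_eq_norm, sub_smul]
    _ ≤ ∑ i, ε / (C + 1) * ‖e i‖ := by
        refine (norm_sum_le _ _).trans (Finset.sum_le_sum fun i _ => ?_)
        rw [norm_smul, Real.norm_eq_abs]
        exact mul_le_mul_of_nonneg_right (hP i s hs).le (norm_nonneg _)
    _ = ε * (C / (C + 1)) := by rw [← Finset.mul_sum]; ring
    _ < ε := mul_lt_of_lt_one_right hε ((div_lt_one (by positivity)).mpr (lt_add_one C))

theorem exists_contDiff_near_of_continuousOn_of_endpoints {f : ℝ → E}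
    (hf : ContinuousOn f I) {ε : ℝ} (hε : 0 < ε) :
    ∃ r : ℝ → E, ContDiff ℝ ω r ∧ r 0 = f 0 ∧ r 1 = f 1 ∧
      ∀ s ∈ I, dist (r s) (f s) < ε := by
  obtain ⟨r, hr, hrf⟩ := exists_contDiff_near_of_continuousOn hf (by positivity : 0 < ε / 2)
  have h0 := hrf 0 unitInterval.zero_mem
  have h1 := hrf 1 unitInterval.one_mem
  refine ⟨fun s => r s + (1 - s) • (f 0 - r 0) + s • (f 1 - r 1),
    (hr.add ((contDiff_const.sub contDiff_id).smul contDiff_const)).add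
      (contDiff_id.smul contDiff_const), by simp, by simp, fun s hs => ?_⟩
  rw [dist_comm, dist_eq_norm] at h0 h1
  have hs' := hrf s hs
  rw [dist_eq_norm] at hs' ⊢
  calc ‖r s + (1 - s) • (f 0 - r 0) + s • (f 1 - r 1) - f s‖
      = ‖(r s - f s) + (1 - s) • (f 0 - r 0) + s • (f 1 - r 1)‖ := by congr 1; abel
    _ ≤ ‖r s - f s‖ + (1 - s) * ‖f 0 - r 0‖ + s * ‖f 1 - r 1‖ := by
        refine (norm_add₃_le ..).trans_eq ?_
        rw [norm_smul, norm_smul, Real.norm_of_nonneg (sub_nonneg.mpr hs.2),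
          Real.norm_of_nonneg hs.1]
    _ ≤ ‖r s - f s‖ + (1 - s) * (ε / 2) + s * (ε / 2) := by
        have := sub_nonneg.mpr hs.2
        have := hs.1
        gcongr
    _ < ε := by linarith

theorem Path.exists_contDiff_homotopic {U : Set E} (hU : IsOpen U) {x y : U} (p : Path x y) :
    ∃ r : ℝ → E, ContDiff ℝ 1 r ∧
      ∃ q : Path x y, (∀ s, (q s : E) = r s) ∧ p.Homotopic q := by
  let f : ℝ → E := fun s => p.extend s
  have hf : Continuous f := continuous_subtype_val.comp p.continuous_extend
  obtain ⟨δ, hδ, hδU⟩ := (isCompact_Icc.image hf).exists_thickening_subset_open hU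
    (by rintro _ ⟨s, -, rfl⟩; exact (p.extend s).2)
  have near (s : I) {v : E} (hv : dist v (f s) < δ) : v ∈ U :=
    hδU (mem_thickening_iff.mpr ⟨f s, mem_image_of_mem f s.2, hv⟩)
  obtain ⟨r, hr, hr0, hr1, hrf⟩ :=
    exists_contDiff_near_of_continuousOn_of_endpoints hf.continuousOn hδ
  let q : Path x y :=
    { toFun := fun s => ⟨r s, near s (hrf s s.2)⟩
      continuous_toFun := by fun_prop
      source' := Subtype.ext (by simp [hr0, f])
      target' := Subtype.ext (by simp [hr1, f]) }
  refine ⟨r, hr.of_le le_top, q, fun _ => rfl, Path.Homotopic.of_continuous_mem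
    (fun z => f z.2 + z.1 • (r z.2 - f z.2)) (by fun_prop) (fun t s => near s ?_)
    (by simp [f]) (by simp [q]) (by simp [f, hr0]) (by simp [f, hr1])⟩
  calc dist (f s + (t : ℝ) • (r s - f s)) (f s) = t * dist (r s) (f s) := by
        rw [dist_self_add_left, norm_smul, dist_eq_norm, Real.norm_of_nonneg t.2.1]
    _ ≤ dist (r s) (f s) := mul_le_of_le_one_left dist_nonneg t.2.2
    _ < δ := hrf s s.2

theorem IsPathConnected.of_compl_subset_range [FiniteDimensional ℝ F] {U : Set E}
    (hU : U.Nonempty) {Φ : F → E} (hΦ : ContDiff ℝ 1 Φ) (hUΦ : Uᶜ ⊆ range Φ)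
    (hdim : finrank ℝ F + 1 < finrank ℝ E) : IsPathConnected U := by
  obtain ⟨x, hx⟩ := hU
  refine ⟨x, hx, fun {y} hy => ?_⟩
  let a : ℝ → E := fun s => (1 - s) • x + s • y
  let b : ℝ → ℝ := fun s => s * (1 - s)
  obtain ⟨w, hw⟩ := exists_forall_add_smul_notMem_range (a := a) (b := b) hΦ
    (by fun_prop) (by fun_prop) (by rw [finrank_self]; omega)
  refine ⟨Path.ofLine (f := fun s => a s + b s • w) (by fun_prop) (by simp [a, b])
    (by simp [a, b]), fun s => ?_⟩
  change a s + b s • w ∈ U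
  by_cases hb : b s = 0
  · obtain h | h : (s : ℝ) = 0 ∨ 1 = (s : ℝ) := by
      simpa only [b, mul_eq_zero, sub_eq_zero] using hb
    · simpa [a, b, h] using hx
    · simpa [a, b, ← h] using hy
  · by_contra h
    exact hw s hb (hUΦ h)

theorem Path.Homotopic.of_contDiff_of_compl_subset_range [FiniteDimensional ℝ F] {U : Set E}
    {Φ : F → E} (hΦ : ContDiff ℝ 1 Φ) (hUΦ : Uᶜ ⊆ range Φ)
    (hdim : finrank ℝ F + 2 < finrank ℝ E) {x y : U} {p q : Path x y} {r₁ r₂ : ℝ → E}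
    (hr₁ : ContDiff ℝ 1 r₁) (hr₂ : ContDiff ℝ 1 r₂) (hp : ∀ s, (p s : E) = r₁ s)
    (hq : ∀ s, (q s : E) = r₂ s) : p.Homotopic q := by
  let a : ℝ × ℝ → E := fun z => (1 - z.1) • r₁ z.2 + z.1 • r₂ z.2
  let b : ℝ × ℝ → ℝ := fun z => z.1 * (1 - z.1) * (z.2 * (1 - z.2))
  obtain ⟨w, hw⟩ := exists_forall_add_smul_notMem_range (a := a) (b := b) hΦ
    (by fun_prop) (by fun_prop) (by rw [finrank_prod, finrank_self]; omega)
  have hr₁0 : r₁ 0 = x := by simpa using (hp 0).symm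
  have hr₂0 : r₂ 0 = x := by simpa using (hq 0).symm
  have hr₁1 : r₁ 1 = y := by simpa using (hp 1).symm
  have hr₂1 : r₂ 1 = y := by simpa using (hq 1).symm
  let K : ℝ × ℝ → E := fun z => a z + b z • w
  have h0 (s : I) : K (0, s) = p s := by simp [K, a, b, hp]
  have h1 (s : I) : K (1, s) = q s := by simp [K, a, b, hq]
  have hx (t : I) : K (t, 0) = x := by simp [K, a, b, hr₁0, hr₂0, ← add_smul]
  have hy (t : I) : K (t, 1) = y := by simp [K, a, b, hr₁1, hr₂1, ← add_smul]
  refine Path.Homotopic.of_continuous_mem K (by fun_prop) (fun t s => ?_) h0 h1 hx hy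
  by_cases hb : b (t, s) = 0
  · obtain h | h | h | h :
        (t : ℝ) = 0 ∨ 1 = (t : ℝ) ∨ (s : ℝ) = 0 ∨ 1 = (s : ℝ) := by
      simpa only [b, mul_eq_zero, sub_eq_zero, or_assoc] using hb
    · rw [h, h0]; exact (p s).2
    · rw [← h, h1]; exact (q s).2
    · rw [h, hx]; exact x.2
    · rw [← h, hy]; exact y.2
  · by_contra h
    exact hw _ hb (hUΦ h)

theorem SimplyConnectedSpace.of_compl_subset_range [FiniteDimensional ℝ F] {U : Set E}
    (hUo : IsOpen U) (hU : U.Nonempty) {Φ : F → E} (hΦ : ContDiff ℝ 1 Φ)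
    (hUΦ : Uᶜ ⊆ range Φ) (hdim : finrank ℝ F + 2 < finrank ℝ E) :
    SimplyConnectedSpace U := by
  rw [simply_connected_iff_paths_homotopic']
  refine ⟨isPathConnected_iff_pathConnectedSpace.mp
    (.of_compl_subset_range hU hΦ hUΦ (by omega)), fun p q => ?_⟩
  obtain ⟨r₁, hr₁, p', hp', hpp'⟩ := p.exists_contDiff_homotopic hUo
  obtain ⟨r₂, hr₂, q', hq', hqq'⟩ := q.exists_contDiff_homotopic hUo
  exact hpp'.trans ((Path.Homotopic.of_contDiff_of_compl_subset_range hΦ hUΦ hdim hr₁ hr₂ hp'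
    hq').trans hqq'.symm)

end FiniteDimensional

theorem Continuous.evalMonic {X : Type*} [TopologicalSpace X] {n : ℕ} {f : X → Fin n → ℝ}
    {g : X → ℝ} (hf : Continuous f) (hg : Continuous g) :
    Continuous fun x => evalMonic n (f x) (g x) := by
  unfold _root_.evalMonic
  fun_prop

theorem evalMonic_ne_zero_of_le_abs {n : ℕ} (c : Fin (n + 1) → ℝ) {x : ℝ}
    (hx : 1 + ∑ j, |c j| ≤ |x|) : evalMonic (n + 1) c x ≠ 0 := by
  have hS : 0 ≤ ∑ j, |c j| := Finset.sum_nonneg fun j _ => abs_nonneg _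
  have h1 : 1 ≤ |x| := by linarith
  have hsum : |∑ j : Fin (n + 1), c j * x ^ (j : ℕ)| ≤ (∑ j, |c j|) * |x| ^ n :=
    calc _ ≤ ∑ j : Fin (n + 1), |c j| * |x| ^ n :=
          (Finset.abs_sum_le_sum_abs _ _).trans <| Finset.sum_le_sum fun j _ => by
            rw [abs_mul, abs_pow]
            exact mul_le_mul_of_nonneg_left (pow_le_pow_right₀ h1 (Nat.lt_succ_iff.mp j.isLt))
              (abs_nonneg _)
      _ = _ := (Finset.sum_mul ..).symm
  have hlt : (∑ j, |c j|) * |x| ^ n < |x ^ (n + 1)| := by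
    rw [abs_pow, pow_succ']
    exact mul_lt_mul_of_pos_right (by linarith) (pow_pos (by linarith) n)
  intro h
  rw [evalMonic, add_eq_zero_iff_eq_neg] at h
  rw [h, abs_neg] at hlt
  linarith

theorem isOpen_Dspace (n m : ℕ) : IsOpen (Dspace (n + 1) m) := by
  rw [Metric.isOpen_iff]
  intro c hc
  let R := 1 + ∑ j, (|c 0 j| + 1)
  let V : Set ((Fin (m + 1) → Fin (n + 1) → ℝ) × ℝ) :=
    ⋃ i, {z | evalMonic (n + 1) (z.1 i) z.2 ≠ 0}
  have hV : IsOpen V := isOpen_iUnion fun i => isOpen_ne_fun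
    (((continuous_apply i).comp continuous_fst).evalMonic continuous_snd) continuous_const
  -- the roots of `c' 0` lie in `[-R, R]` for `c'` near `c`; on `[-R, R]` use the tube lemma
  obtain ⟨u, v, hu, -, hcu, hRv, huv⟩ := generalized_tube_lemma isCompact_singleton
    (isCompact_Icc (a := -R) (b := R)) hV
    (by rintro ⟨_, x⟩ ⟨rfl, -⟩; exact mem_iUnion.mpr (hc x))
  obtain ⟨ε, hε, hεu⟩ := Metric.isOpen_iff.mp hu c (hcu rfl)
  refine ⟨min ε 1, by positivity, fun c' hc' x => ?_⟩
  rw [mem_ball, lt_min_iff] at hc'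
  by_cases hx : x ∈ Icc (-R) R
  · obtain ⟨i, hi⟩ := mem_iUnion.mp (huv (mk_mem_prod (hεu hc'.1) (hRv hx)))
    exact ⟨i, hi⟩
  refine ⟨0, evalMonic_ne_zero_of_le_abs _ ?_⟩
  have hcoef (j) : |c' 0 j| ≤ |c 0 j| + 1 := by
    have h1 := abs_sub_abs_le_abs_sub (c' 0 j) (c 0 j)
    have h2 := (dist_le_pi_dist (c' 0) (c 0) j).trans (dist_le_pi_dist c' c 0)
    rw [Real.dist_eq] at h2
    linarith [hc'.2]
  rw [mem_Icc, ← abs_le, not_le] at hx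
  linarith [Finset.sum_le_sum fun j (_ : j ∈ Finset.univ) => hcoef j]

theorem nonempty_Dspace {n m : ℕ} (hm : 1 ≤ m) : (Dspace (n + 1) m).Nonempty := by
  refine ⟨fun i => Fin.cons ((i : ℕ) : ℝ) 0, fun x => ?_⟩
  by_cases hx : x ^ (n + 1) = 0
  · exact ⟨⟨1, by omega⟩, by simp [evalMonic, Fin.sum_univ_succ, hx]⟩
  · exact ⟨0, by simpa [evalMonic, Fin.sum_univ_succ] using hx⟩

/-- Coefficient vectors list the constant term first; it is solved for so that `p.1` is a root
of every polynomial of the tuple. -/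
def withCommonRoot (n m : ℕ) (p : ℝ × (Fin (m + 1) → Fin n → ℝ)) :
    Fin (m + 1) → Fin (n + 1) → ℝ :=
  fun i => Fin.cons (-(p.1 ^ (n + 1) + ∑ j : Fin n, p.2 i j * p.1 ^ ((j : ℕ) + 1))) (p.2 i)

theorem contDiff_withCommonRoot (n m : ℕ) : ContDiff ℝ 1 (withCommonRoot n m) := by
  refine contDiff_pi.mpr fun i => contDiff_pi.mpr fun j => Fin.cases ?_ (fun j => ?_) j
  · simp only [withCommonRoot, Fin.cons_zero]
    fun_prop
  · simp only [withCommonRoot, Fin.cons_succ]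
    fun_prop

theorem compl_Dspace_subset_range (n m : ℕ) :
    (Dspace (n + 1) m)ᶜ ⊆ range (withCommonRoot n m) := by
  intro c hc
  simp only [Dspace, mem_compl_iff, mem_ofPred_eq, not_forall, not_exists, not_not] at hc
  obtain ⟨x, hx⟩ := hc
  refine ⟨(x, fun i j => c i j.succ),
    funext fun i => funext fun j => Fin.cases ?_ (fun j => ?_) j⟩
  · have h := hx i
    rw [evalMonic, Fin.sum_univ_succ] at h
    simp only [withCommonRoot, Fin.cons_zero, Fin.val_zero, pow_zero, mul_one,
      Fin.val_succ] at h ⊢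
    linarith
  · simp [withCommonRoot]

theorem finrank_domain_withCommonRoot_add (n m : ℕ) :
    finrank ℝ (ℝ × (Fin (m + 1) → Fin n → ℝ)) + m =
      finrank ℝ (Fin (m + 1) → Fin (n + 1) → ℝ) := by
  simp only [finrank_prod, finrank_self, finrank_pi_fintype, Finset.sum_const,
    Finset.card_univ, Fintype.card_fin, smul_eq_mul]
  ring

/-- For every `n ≥ 1`: if `m ≥ 2` then `D(n,m)` is path-connected, and if `m ≥ 3` then
`D(n,m)` is simply connected. -/
theorem dspace_connectivity (n m : ℕ) (hn : 1 ≤ n) :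
    (2 ≤ m → PathConnectedSpace ↥(Dspace n m)) ∧
    (3 ≤ m → SimplyConnectedSpace ↥(Dspace n m)) := by
  obtain ⟨n, rfl⟩ := Nat.exists_eq_add_of_le' hn
  have hcodim := finrank_domain_withCommonRoot_add n m
  refine ⟨fun hm => isPathConnected_iff_pathConnectedSpace.mp ?_, fun hm => ?_⟩
  · exact .of_compl_subset_range (nonempty_Dspace (by omega)) (contDiff_withCommonRoot n m)
      (compl_Dspace_subset_range n m) (by omega)
  · exact .of_compl_subset_range (isOpen_Dspace n m) (nonempty_Dspace (by omega))
      (contDiff_withCommonRoot n m) (compl_Dspace_subset_range n m) (by omega)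

end
end

section
/- Let n ≥ 0 and m ≥ 1, and let (p_0,…,p_m) and (q_0,…,q_m) be two (m+1)-tuples of monic real polynomials, all of degree n, such that the polynomials in each tuple have no common root in ℂ. If p_i(x)·q_j(x) = p_j(x)·q_i(x) for all indices i, j and all x ∈ ℝ (i.e. the two tuples define the same map from ℝ to ℝP^m), then p_i = q_i for every i. -/
/-!
The `p i` have no common complex root, so they generate the unit ideal of `ℝ[X]`: say
`∑ c j * p j = 1`. Then `q i = ∑ c j * p j * q i = p i * ∑ c j * q j`, so `p i ∣ q i`, and monic
polynomials of the same degree one of which divides the other are equal.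
-/

open Polynomial

/-- A generator of the ideal spanned by the family would be a nonconstant common divisor,
and any of its roots in `L` would be a common root. -/
theorem Polynomial.span_range_eq_top_of_forall_exists_aeval_ne_zero {K L ι : Type*} [Field K]
    [Field L] [IsAlgClosed L] [Algebra K L] (p : ι → K[X])
    (hp : ∀ z : L, ∃ i, aeval z (p i) ≠ 0) :
    Ideal.span (Set.range p) = ⊤ := by
  by_contra hne
  set g := Submodule.IsPrincipal.generator (Ideal.span (Set.range p))
  have hspan_g : Ideal.span {g} = Ideal.span (Set.range p) :=
    Submodule.IsPrincipal.span_singleton_generator _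
  have hg_dvd : ∀ i, g ∣ p i := fun i =>
    Ideal.mem_span_singleton.mp (hspan_g ▸ Ideal.subset_span ⟨i, rfl⟩)
  have hg_deg : g.degree ≠ 0 := fun hdeg =>
    hne (hspan_g ▸ Ideal.span_singleton_eq_top.mpr (isUnit_iff_degree_eq_zero.mpr hdeg))
  obtain ⟨z, hz⟩ := IsAlgClosed.exists_aeval_eq_zero L g hg_deg
  obtain ⟨i, hi⟩ := hp z
  obtain ⟨r, hr⟩ := hg_dvd i
  exact hi (by rw [hr, map_mul, hz, zero_mul])

theorem dvd_of_span_range_eq_top_of_mul_comm {R ι : Type*} [CommSemiring R] [Fintype ι]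
    {p q : ι → R} (hspan : Ideal.span (Set.range p) = ⊤)
    (hpq : ∀ i j, p i * q j = p j * q i) (i : ι) : p i ∣ q i := by
  obtain ⟨c, hc⟩ :=
    Ideal.mem_span_range_iff_exists_fun.mp (hspan ▸ Submodule.mem_top : (1 : R) ∈ _)
  refine ⟨∑ j, c j * q j, ?_⟩
  calc q i = (∑ j, c j * p j) * q i := by rw [hc, one_mul]
    _ = ∑ j, c j * (p j * q i) := by simp only [Finset.sum_mul, mul_assoc]
    _ = ∑ j, c j * (p i * q j) := by simp only [hpq]
    _ = p i * ∑ j, c j * q j := by simp only [Finset.mul_sum, mul_left_comm]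

theorem tuples_defining_same_map_eq_general (n m : ℕ)
    (p q : Fin (m + 1) → Polynomial ℝ)
    (hpmonic : ∀ i, (p i).Monic) (hpdeg : ∀ i, (p i).natDegree = n)
    (hqmonic : ∀ i, (q i).Monic) (hqdeg : ∀ i, (q i).natDegree = n)
    (hp : ∀ z : ℂ, ∃ i, Polynomial.aeval z (p i) ≠ 0)
    (h : ∀ i j, ∀ x : ℝ, (p i).eval x * (q j).eval x = (p j).eval x * (q i).eval x) :
    ∀ i, p i = q i := by
  have hpq : ∀ i j, p i * q j = p j * q i := fun i j =>
    Polynomial.funext fun x => by simp only [eval_mul, h i j x]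
  intro i
  have hdvd : p i ∣ q i := dvd_of_span_range_eq_top_of_mul_comm
    (span_range_eq_top_of_forall_exists_aeval_ne_zero p hp) hpq i
  exact (eq_of_monic_of_dvd_of_natDegree_le (hpmonic i) (hqmonic i) hdvd
    (by rw [hpdeg, hqdeg])).symm

/-- Two `(m+1)`-tuples of monic real polynomials of the same degree `n`, each with no
common root in `ℂ`, which define the same map from `ℝ` to `ℝP^m` (i.e. satisfy
`p_i(x)·q_j(x) = p_j(x)·q_i(x)` for all `i, j` and all real `x`), are equal. -/
theorem tuples_defining_same_map_eq (n m : ℕ) (hm : 1 ≤ m)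
    (p q : Fin (m + 1) → Polynomial ℝ)
    (hpmonic : ∀ i, (p i).Monic) (hpdeg : ∀ i, (p i).natDegree = n)
    (hqmonic : ∀ i, (q i).Monic) (hqdeg : ∀ i, (q i).natDegree = n)
    (hp : ∀ z : ℂ, ∃ i, Polynomial.aeval z (p i) ≠ 0)
    (hq : ∀ z : ℂ, ∃ i, Polynomial.aeval z (q i) ≠ 0)
    (h : ∀ i j, ∀ x : ℝ, (p i).eval x * (q j).eval x = (p j).eval x * (q i).eval x) :
    ∀ i, p i = q i :=
  tuples_defining_same_map_eq_general n m p q hpmonic hpdeg hqmonic hqdeg hp h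
end

section
/- For all n ≥ 1 and m ≥ 1, rat(n,m) equals the union of the sets RRat(k,m) over all integers k with 0 ≤ k ≤ n and k ≡ n (mod 2), as subsets of Ω ℝP^m. -/
open OnePoint Projectivization

noncomputable section

/-- Real projective `m`-space, the projectivization of `ℝ^{m+1}`. -/
abbrev RP (m : ℕ) := Projectivization ℝ (Fin (m + 1) → ℝ)

instance (m : ℕ) : TopologicalSpace (RP m) :=
  inferInstanceAs (TopologicalSpace (Quotient _))

/-- The basepoint `[1 : 1 : ⋯ : 1]` of `ℝP^m`. -/
def basept (m : ℕ) : RP m :=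
  Projectivization.mk ℝ (fun _ => (1 : ℝ)) (by
    intro h
    exact one_ne_zero (congrFun h 0))

/-- The based loop space `Ω ℝP^m`: continuous maps `ℝP¹ = ℝ ∪ {∞} → ℝP^m`
sending `∞` to the basepoint, with the compact-open topology. -/
abbrev OmegaRP (m : ℕ) := {f : C(OnePoint ℝ, RP m) // f ∞ = basept m}

/-- The set of based loops arising from `(m+1)`-tuples of monic real polynomials of
degree `n` with no common complex root. -/
def RRat (n m : ℕ) : Set (OmegaRP m) :=
  {f | ∃ p : Fin (m + 1) → Polynomial ℝ,
    (∀ i, (p i).Monic) ∧ (∀ i, (p i).natDegree = n) ∧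
    (∀ z : ℂ, ∃ i, Polynomial.aeval z (p i) ≠ 0) ∧
    ∀ x : ℝ, ∃ hx : (fun i => (p i).eval x) ≠ 0,
      f.1 (x : OnePoint ℝ) = Projectivization.mk ℝ (fun i => (p i).eval x) hx}

/-- `rat n m` is the closure of `RRat n m` in `Ω ℝP^m`. -/
def ratSet (n m : ℕ) : Set (OmegaRP m) := closure (RRat n m)
namespace RatAux

/-- Sum of squares of the coordinates. -/
def sumSq {m : ℕ} (v : Fin (m + 1) → ℝ) : ℝ := ∑ k, v k ^ 2

lemma sumSq_nonneg {m : ℕ} (v : Fin (m + 1) → ℝ) : 0 ≤ sumSq v :=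
  Finset.sum_nonneg fun k _ => sq_nonneg _

lemma sumSq_pos {m : ℕ} {v : Fin (m + 1) → ℝ} (hv : v ≠ 0) : 0 < sumSq v := by
  obtain ⟨i, hi⟩ := Function.ne_iff.mp hv
  have hvi : v i ≠ 0 := by simpa using hi
  have : (0:ℝ) < v i ^ 2 := pow_two_pos_of_ne_zero hvi
  exact Finset.sum_pos' (fun k _ => sq_nonneg _) ⟨i, Finset.mem_univ i, this⟩

lemma sq_le_sumSq {m : ℕ} (v : Fin (m + 1) → ℝ) (i : Fin (m + 1)) : v i ^ 2 ≤ sumSq v :=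
  Finset.single_le_sum (fun k _ => sq_nonneg (v k)) (Finset.mem_univ i)

lemma abs_mul_le_sumSq {m : ℕ} (v : Fin (m + 1) → ℝ) (i j : Fin (m + 1)) :
    |v i * v j| ≤ sumSq v := by
  have h1 := sq_le_sumSq v i
  have h2 := sq_le_sumSq v j
  have := abs_mul_abs_self (v i - v j)
  have := abs_mul_abs_self (v i + v j)
  cases abs_cases (v i * v j) with
  | inl h => nlinarith [sq_nonneg (v i - v j)]
  | inr h => nlinarith [sq_nonneg (v i + v j)]

/-- The raw "projection matrix" map. -/
def Phi {m : ℕ} (v : Fin (m + 1) → ℝ) : Fin (m + 1) → Fin (m + 1) → ℝ :=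
  fun i j => v i * v j / sumSq v

lemma sumSq_smul {m : ℕ} (a : ℝ) (v : Fin (m + 1) → ℝ) :
    sumSq (a • v) = a ^ 2 * sumSq v := by
  simp only [sumSq, Pi.smul_apply, smul_eq_mul, mul_pow, Finset.mul_sum]

lemma Phi_smul {m : ℕ} {a : ℝ} (ha : a ≠ 0) (v : Fin (m + 1) → ℝ) :
    Phi (a • v) = Phi v := by
  funext i j
  simp only [Phi, sumSq_smul, Pi.smul_apply, smul_eq_mul]
  have h1 : a * v i * (a * v j) = a ^ 2 * (v i * v j) := by ring
  rw [h1, mul_div_mul_left _ _ (pow_ne_zero 2 ha)]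

/-- The embedding of `RP m` into matrices. -/
def phi (m : ℕ) : RP m → (Fin (m + 1) → Fin (m + 1) → ℝ) :=
  Projectivization.lift (fun v => Phi v.1) (by
    rintro ⟨v, hv⟩ ⟨w, hw⟩ t (rfl : v = t • w)
    have ht : t ≠ 0 := by
      rintro rfl
      exact hv (zero_smul _ _)
    exact Phi_smul ht w)

lemma phi_mk {m : ℕ} (v : Fin (m + 1) → ℝ) (hv : v ≠ 0) :
    phi m (Projectivization.mk ℝ v hv) = Phi v := rfl

lemma continuous_phi (m : ℕ) : Continuous (phi m) := by
  apply Continuous.quotient_lift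
  have hval : Continuous (fun v : {w : Fin (m + 1) → ℝ // w ≠ 0} => (v : Fin (m + 1) → ℝ)) :=
    continuous_subtype_val
  have happ : ∀ i, Continuous (fun v : {w : Fin (m + 1) → ℝ // w ≠ 0} => (v : Fin (m+1) → ℝ) i) :=
    fun i => (continuous_apply i).comp hval
  have hsum : Continuous (fun v : {w : Fin (m + 1) → ℝ // w ≠ 0} => sumSq (v : Fin (m+1) → ℝ)) := by
    apply continuous_finset_sum
    intro k _
    exact (happ k).pow 2
  exact continuous_pi fun i => continuous_pi fun j =>
    ((happ i).mul (happ j)).div hsum fun v => (sumSq_pos v.2).ne'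

lemma phi_injective (m : ℕ) : Function.Injective (phi m) := by
  intro x y
  induction x using Projectivization.ind with | h v hv =>
  induction y using Projectivization.ind with | h w hw =>
  intro h
  rw [phi_mk, phi_mk] at h
  obtain ⟨i₀, hi₀⟩ := Function.ne_iff.mp hv
  simp only [Pi.zero_apply] at hi₀
  have hS := sumSq_pos hv
  have hT := sumSq_pos hw
  have key : ∀ j, v i₀ * v j * sumSq w = w i₀ * w j * sumSq v := by
    intro j
    have := congrFun (congrFun h i₀) j
    simp only [Phi] at this
    rwa [div_eq_div_iff hS.ne' hT.ne'] at this
  have hwi₀ : w i₀ ≠ 0 := by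
    intro h0
    have := key i₀
    rw [h0] at this
    simp only [zero_mul] at this
    have : v i₀ * v i₀ = 0 := by
      have := mul_eq_zero.mp this
      rcases this with h1 | h1
      · exact h1
      · exact absurd h1 hT.ne'
    exact hi₀ (mul_self_eq_zero.mp this)
  rw [Projectivization.mk_eq_mk_iff']
  refine ⟨(w i₀ * sumSq v) / (v i₀ * sumSq w), funext fun j => ?_⟩
  show (w i₀ * sumSq v) / (v i₀ * sumSq w) * w j = v j
  rw [div_mul_eq_mul_div, div_eq_iff (mul_ne_zero hi₀ hT.ne')]
  linear_combination -key j

instance rpT2 (m : ℕ) : T2Space (RP m) :=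
  T2Space.of_injective_continuous (phi_injective m) (continuous_phi m)

lemma continuous_mk {X : Type*} [TopologicalSpace X] {m : ℕ} {F : X → Fin (m + 1) → ℝ}
    (hF : Continuous F) (h : ∀ x, F x ≠ 0) :
    Continuous (fun x => Projectivization.mk ℝ (F x) (h x)) := by
  have h1 : Continuous (fun x => (⟨F x, h x⟩ : {v : Fin (m + 1) → ℝ // v ≠ 0})) :=
    hF.subtype_mk h
  exact Continuous.comp continuous_quot_mk h1

lemma mk_smul {m : ℕ} {v : Fin (m + 1) → ℝ} {a : ℝ} (hv : v ≠ 0) (h' : a • v ≠ 0) :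
    Projectivization.mk ℝ (a • v) h' = Projectivization.mk ℝ v hv :=
  (Projectivization.mk_eq_mk_iff' ℝ _ _ _ _).mpr ⟨a, rfl⟩

lemma mk_mul {m : ℕ} {v : Fin (m + 1) → ℝ} {a : ℝ} (hv : v ≠ 0) (h' : (fun i => a * v i) ≠ 0) :
    Projectivization.mk ℝ (fun i => a * v i) h' = Projectivization.mk ℝ v hv :=
  (Projectivization.mk_eq_mk_iff' ℝ _ _ _ _).mpr ⟨a, rfl⟩

lemma sphere_ne_zero {m : ℕ} {v : Fin (m + 1) → ℝ}
    (hv : v ∈ Metric.sphere (0 : Fin (m + 1) → ℝ) 1) : v ≠ 0 := by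
  intro h0
  rw [mem_sphere_iff_norm, h0] at hv
  simp at hv

instance rpCompact (m : ℕ) : CompactSpace (RP m) := by
  constructor
  have h2 : Continuous (fun v : Metric.sphere (0 : Fin (m + 1) → ℝ) 1 =>
      Projectivization.mk ℝ (v : Fin (m + 1) → ℝ) (sphere_ne_zero v.2)) :=
    continuous_mk continuous_subtype_val _
  have hsurj : Function.Surjective (fun v : Metric.sphere (0 : Fin (m + 1) → ℝ) 1 =>
      Projectivization.mk ℝ (v : Fin (m + 1) → ℝ) (sphere_ne_zero v.2)) := by
    intro y
    induction y using Projectivization.ind with | h w hw =>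
    have hnw : ‖w‖ ≠ 0 := norm_ne_zero_iff.mpr hw
    have hmem : ‖w‖⁻¹ • w ∈ Metric.sphere (0 : Fin (m + 1) → ℝ) 1 := by
      rw [mem_sphere_iff_norm, sub_zero, norm_smul, norm_inv, norm_norm]
      exact inv_mul_cancel₀ hnw
    exact ⟨⟨_, hmem⟩, mk_smul hw _⟩
  rw [← Set.range_eq_univ.mpr hsurj]
  exact isCompact_range h2

/-- metric on `RP m` pulled back from the matrix embedding. -/
abbrev rpMS (m : ℕ) : MetricSpace (RP m) :=
  (((continuous_phi m).isClosedEmbedding (phi_injective m)).isEmbedding).comapMetricSpace (phi m)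

attribute [local instance] rpMS

lemma rp_dist {m : ℕ} (a b : RP m) : dist a b = dist (phi m a) (phi m b) := rfl

open Filter Polynomial in
lemma eventually_ne_zero_cocompact : ∀ᶠ x : ℝ in cocompact ℝ, x ≠ 0 :=
  mem_cocompact.mpr ⟨{0}, isCompact_singleton, fun x hx => hx⟩

open Filter Polynomial in
lemma tendsto_pow_div_pow {l k : ℕ} (h : l < k) :
    Tendsto (fun x : ℝ => x ^ l / x ^ k) (cocompact ℝ) (nhds 0) := by
  have hb : ∀ᶠ x : ℝ in cocompact ℝ, ‖x ^ l / x ^ k‖ ≤ ‖x‖⁻¹ := by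
    filter_upwards [tendsto_norm_cocompact_atTop.eventually_ge_atTop 1] with x hx
    have hx0 : (0:ℝ) < ‖x‖ := lt_of_lt_of_le one_pos hx
    rw [norm_div, norm_pow, norm_pow]
    have h1 : ‖x‖ ^ k ≥ ‖x‖ ^ (l + 1) := pow_le_pow_right₀ hx (Nat.succ_le_of_lt h)
    have h2 : ‖x‖ ^ l / ‖x‖ ^ k ≤ ‖x‖ ^ l / ‖x‖ ^ (l + 1) :=
      div_le_div_of_nonneg_left (by positivity) (by positivity) h1
    calc ‖x‖ ^ l / ‖x‖ ^ k ≤ ‖x‖ ^ l / ‖x‖ ^ (l + 1) := h2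
    _ = ‖x‖⁻¹ := by
        rw [pow_succ, div_mul_eq_div_div, div_self (pow_ne_zero _ hx0.ne'), one_div]
  exact squeeze_zero_norm' hb tendsto_norm_cocompact_atTop.inv_tendsto_atTop

open Filter Polynomial in
lemma tendsto_eval_div_pow {p : Polynomial ℝ} {k : ℕ} (hp : p.natDegree ≤ k) :
    Tendsto (fun x : ℝ => Polynomial.eval x p / x ^ k) (cocompact ℝ) (nhds (p.coeff k)) := by
  have hev : ∀ᶠ x : ℝ in cocompact ℝ,
      (∑ i ∈ Finset.range (k + 1), p.coeff i * (x ^ i / x ^ k))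
        = Polynomial.eval x p / x ^ k := by
    filter_upwards with x
    rw [Polynomial.eval_eq_sum_range' (Nat.lt_succ_of_le hp), Finset.sum_div]
    exact Finset.sum_congr rfl fun i _ => (mul_div_assoc _ _ _).symm
  have h1 : Tendsto (fun x : ℝ => ∑ i ∈ Finset.range (k + 1), p.coeff i * (x ^ i / x ^ k))
      (cocompact ℝ) (nhds (∑ i ∈ Finset.range (k + 1), if i = k then p.coeff k else 0)) := by
    apply tendsto_finset_sum
    intro i hi
    rcases eq_or_lt_of_le (Nat.lt_succ_iff.mp (Finset.mem_range.mp hi)) with h | h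
    · subst h
      simp only [if_pos rfl]
      have : ∀ᶠ x : ℝ in cocompact ℝ, p.coeff i = p.coeff i * (x ^ i / x ^ i) := by
        filter_upwards [eventually_ne_zero_cocompact] with x hx
        rw [div_self (pow_ne_zero _ hx), mul_one]
      exact Tendsto.congr' this tendsto_const_nhds
    · simp only [if_neg h.ne]
      have := (tendsto_pow_div_pow h).const_mul (p.coeff i)
      simpa using this
  have h2 : (∑ i ∈ Finset.range (k + 1), if i = k then p.coeff k else 0) = p.coeff k := by
    rw [Finset.sum_ite_eq' (Finset.range (k + 1)) k (fun _ => p.coeff k)]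
    simp
  rw [h2] at h1
  exact h1.congr' hev

open Filter Polynomial in
lemma tendsto_mk_eval {m k : ℕ} {v : Fin (m + 1) → Polynomial ℝ}
    (hd : ∀ i, (v i).natDegree ≤ k)
    (hw : (fun i => (v i).coeff k) ≠ 0)
    (hnz : ∀ x : ℝ, (fun i => Polynomial.eval x (v i)) ≠ 0) :
    Tendsto (fun x : ℝ => Projectivization.mk ℝ (fun i => Polynomial.eval x (v i)) (hnz x))
      (cocompact ℝ) (nhds (Projectivization.mk ℝ _ hw)) := by
  set w : Fin (m + 1) → ℝ := fun i => (v i).coeff k with hwdef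
  have hU : ∀ x : ℝ, x ≠ 0 → ((x ^ k)⁻¹ • fun i => Polynomial.eval x (v i)) ≠ 0 := fun x hx =>
    smul_ne_zero (inv_ne_zero (pow_ne_zero k hx)) (hnz x)
  set U : ℝ → {y : Fin (m + 1) → ℝ // y ≠ 0} := fun x =>
    if hx : x = 0 then ⟨w, hw⟩ else ⟨_, hU x hx⟩ with hUdef
  have hval : Tendsto (fun x => (U x : Fin (m + 1) → ℝ)) (cocompact ℝ) (nhds w) := by
    have hev : ∀ᶠ x : ℝ in cocompact ℝ,
        (fun i => Polynomial.eval x (v i) / x ^ k) = (U x : Fin (m + 1) → ℝ) := by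
      filter_upwards [eventually_ne_zero_cocompact] with x hx
      simp only [hUdef, dif_neg hx]
      funext i
      simp [Pi.smul_apply, smul_eq_mul, inv_mul_eq_div]
    refine Tendsto.congr' hev ?_
    rw [tendsto_pi_nhds]
    exact fun i => tendsto_eval_div_pow (hd i)
  have hU2 : Tendsto U (cocompact ℝ) (nhds ⟨w, hw⟩) := tendsto_subtype_rng.mpr hval
  have hcmk : Continuous (fun y : {y : Fin (m + 1) → ℝ // y ≠ 0} =>
      Projectivization.mk ℝ y.1 y.2) := continuous_mk continuous_subtype_val _
  have hlim := (hcmk.tendsto _).comp hU2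
  refine Tendsto.congr' ?_ hlim
  filter_upwards [eventually_ne_zero_cocompact] with x hx
  show Projectivization.mk ℝ (U x : Fin (m + 1) → ℝ) (U x).2 = _
  simp only [hUdef, dif_neg hx]
  exact mk_smul (hnz x) _

open Filter Polynomial in
lemma tendsto_coe_infty : Tendsto (fun x : ℝ => (x : OnePoint ℝ)) (cocompact ℝ) (nhds ∞) := by
  rw [OnePoint.nhds_infty_eq, Filter.coclosedCompact_eq_cocompact]
  exact Tendsto.mono_right tendsto_map le_sup_left

/-- The function underlying the loop of a tuple of polynomials. -/
def polyLoopFun {m : ℕ} (q : Fin (m + 1) → Polynomial ℝ)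
    (hnz : ∀ x : ℝ, (fun i => Polynomial.eval x (q i)) ≠ 0) : OnePoint ℝ → RP m :=
  fun z => Option.elim z (basept m) (fun x => Projectivization.mk ℝ _ (hnz x))

open Filter Polynomial in
lemma continuous_polyLoopFun {m n : ℕ} {q : Fin (m + 1) → Polynomial ℝ}
    (hnz : ∀ x : ℝ, (fun i => Polynomial.eval x (q i)) ≠ 0)
    (hq : ∀ i, (q i).Monic) (hdeg : ∀ i, (q i).natDegree = n) :
    Continuous (polyLoopFun q hnz) := by
  rw [OnePoint.continuous_iff, Filter.coclosedCompact_eq_cocompact]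
  constructor
  · show Tendsto (fun x : ℝ => Projectivization.mk ℝ (fun i => Polynomial.eval x (q i)) (hnz x))
      (cocompact ℝ) (nhds (basept m))
    have hwnz : (fun i => (q i).coeff n) ≠ 0 := by
      intro h
      have := congrFun h 0
      rw [← hdeg 0] at this
      simp only [Pi.zero_apply] at this
      exact one_ne_zero ((hq 0).coeff_natDegree ▸ this)
    have h := tendsto_mk_eval (fun i => (hdeg i).le) hwnz hnz
    have hb : Projectivization.mk ℝ (fun i => (q i).coeff n) hwnz = basept m := by
      rw [basept, Projectivization.mk_eq_mk_iff']
      refine ⟨1, funext fun i => ?_⟩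
      simp only [Pi.smul_apply, smul_eq_mul, one_mul]
      rw [← hdeg i]
      exact ((hq i).coeff_natDegree).symm
    rwa [hb] at h
  · exact continuous_mk (continuous_pi fun i => (q i).continuous) _

open Finset in
lemma Phi_dist_le {m : ℕ} {P b : Fin (m + 1) → ℝ} (hP : P ≠ 0) {B R : ℝ}
    (hB : 0 < B) (hR : 1 ≤ R)
    (hb1 : ∀ l, B ≤ b l) (hb2 : ∀ l, b l ≤ B * R) :
    dist (Phi (fun i => P i * b i)) (Phi P) ≤ R ^ 2 - 1 := by
  set Q : Fin (m + 1) → ℝ := fun i => P i * b i with hQdef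
  have hS := sumSq_pos hP
  have hbpos : ∀ l, 0 < b l := fun l => lt_of_lt_of_le hB (hb1 l)
  have hTS : B ^ 2 * sumSq P ≤ sumSq Q := by
    rw [sumSq, sumSq, Finset.mul_sum]
    apply Finset.sum_le_sum
    intro l _
    have h1 : B ^ 2 ≤ b l ^ 2 := pow_le_pow_left₀ hB.le (hb1 l) 2
    have h2 : (0:ℝ) ≤ P l ^ 2 := sq_nonneg _
    calc B ^ 2 * P l ^ 2 ≤ b l ^ 2 * P l ^ 2 := by nlinarith
    _ = (P l * b l) ^ 2 := by ring
  have hT : 0 < sumSq Q := lt_of_lt_of_le (by positivity) hTS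
  have hR2 : (0:ℝ) ≤ R ^ 2 - 1 := by nlinarith
  rw [dist_pi_le_iff hR2]
  intro i
  rw [dist_pi_le_iff hR2]
  intro j
  rw [Real.dist_eq]
  have hintl : ∀ a c : Fin (m + 1), |b a * b c - b i * b j| ≤ B ^ 2 * R ^ 2 - B ^ 2 := by
    intro a c
    have h1 : B * B ≤ b a * b c :=
      mul_le_mul (hb1 a) (hb1 c) hB.le (le_trans hB.le (hb1 a))
    have h2 : b a * b c ≤ (B * R) * (B * R) :=
      mul_le_mul (hb2 a) (hb2 c) (hbpos c).le (by positivity)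
    have h3 : B * B ≤ b i * b j :=
      mul_le_mul (hb1 i) (hb1 j) hB.le (le_trans hB.le (hb1 i))
    have h4 : b i * b j ≤ (B * R) * (B * R) :=
      mul_le_mul (hb2 i) (hb2 j) (hbpos j).le (by positivity)
    rw [abs_le]
    constructor <;> nlinarith
  have hnum : |b i * b j * sumSq P - sumSq Q| ≤ sumSq P * (B ^ 2 * (R ^ 2 - 1)) := by
    have hexp : b i * b j * sumSq P - sumSq Q = ∑ l, P l ^ 2 * (b i * b j - b l * b l) := by
      rw [sumSq, sumSq, Finset.mul_sum, ← Finset.sum_sub_distrib]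
      apply Finset.sum_congr rfl
      intro l _
      ring
    rw [hexp]
    calc |∑ l, P l ^ 2 * (b i * b j - b l * b l)| ≤ ∑ l, |P l ^ 2 * (b i * b j - b l * b l)| :=
          Finset.abs_sum_le_sum_abs _ _
    _ ≤ ∑ l, P l ^ 2 * (B ^ 2 * R ^ 2 - B ^ 2) := by
        apply Finset.sum_le_sum
        intro l _
        rw [abs_mul, abs_of_nonneg (sq_nonneg (P l))]
        have := hintl l l
        have h5 : |b i * b j - b l * b l| ≤ B ^ 2 * R ^ 2 - B ^ 2 := by
          rw [abs_sub_comm]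
          exact this
        exact mul_le_mul_of_nonneg_left h5 (sq_nonneg _)
    _ = sumSq P * (B ^ 2 * (R ^ 2 - 1)) := by
        rw [← Finset.sum_mul, ← sumSq]
        ring
  have key : Phi Q i j - Phi P i j
      = P i * P j * (b i * b j * sumSq P - sumSq Q) / (sumSq Q * sumSq P) := by
    simp only [Phi, hQdef]
    have hT' : sumSq (fun i => P i * b i) ≠ 0 := hT.ne'
    rw [div_sub_div _ _ hT' hS.ne']
    ring
  have habs : |Phi Q i j - Phi P i j| ≤ R ^ 2 - 1 := by
    rw [key, abs_div]
    rw [abs_of_pos (mul_pos hT hS)]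
    have hnum2 : |P i * P j * (b i * b j * sumSq P - sumSq Q)|
        ≤ sumSq P * (sumSq P * (B ^ 2 * (R ^ 2 - 1))) := by
      rw [abs_mul]
      exact mul_le_mul (abs_mul_le_sumSq P i j) hnum (abs_nonneg _) (sumSq_nonneg P)
    have hden : (B ^ 2 * sumSq P) * sumSq P ≤ sumSq Q * sumSq P :=
      mul_le_mul_of_nonneg_right hTS hS.le
    calc |P i * P j * (b i * b j * sumSq P - sumSq Q)| / (sumSq Q * sumSq P)
        ≤ (sumSq P * (sumSq P * (B ^ 2 * (R ^ 2 - 1)))) / ((B ^ 2 * sumSq P) * sumSq P) :=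
          div_le_div₀ (by positivity) hnum2 (by positivity) hden
    _ = R ^ 2 - 1 := by
        field_simp
  exact habs

def RRat' (n m : ℕ) : Set {f : C(OnePoint ℝ, RP m) // f ∞ = basept m} :=
  {f | ∃ p : Fin (m + 1) → Polynomial ℝ,
    (∀ i, (p i).Monic) ∧ (∀ i, (p i).natDegree = n) ∧
    (∀ z : ℂ, ∃ i, Polynomial.aeval z (p i) ≠ 0) ∧
    ∀ x : ℝ, ∃ hx : (fun i => (p i).eval x) ≠ 0,
      f.1 (x : OnePoint ℝ) = Projectivization.mk ℝ (fun i => (p i).eval x) hx}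

open Filter Polynomial in
lemma rrat'_subset_closure {n m k : ℕ} (hm : 1 ≤ m) (hkn : k ≤ n) (hpar : k % 2 = n % 2) :
    RRat' k m ⊆ closure (RRat' n m) := by
  letI := rpMS m
  intro f hf
  obtain ⟨p, hmon, hdeg, hroot, hval⟩ := hf
  rw [Metric.mem_closure_iff]
  intro ε hε
  set d := (n - k) / 2 with hddef
  have hnk : n = k + 2 * d := by omega
  -- the "other index" function
  have hm1 : 1 < m + 1 := by omega
  set other : Fin (m + 1) → Fin (m + 1) := fun i =>
    if (i : ℕ) = 0 then ⟨1, hm1⟩ else ⟨0, Nat.succ_pos m⟩ with hotherdef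
  have hother : ∀ i, other i ≠ i := by
    intro i h
    by_cases h0 : (i : ℕ) = 0
    · rw [hotherdef] at h
      simp only [if_pos h0] at h
      have := congrArg Fin.val h
      simp [h0] at this
    · rw [hotherdef] at h
      simp only [if_neg h0] at h
      have := congrArg Fin.val h
      simp at this
      exact h0 this.symm
  -- the bad set of parameters
  set Bad : Set ℝ := ⋃ i₀ : Fin (m + 1),
    (fun z : ℂ => -((z ^ 2).re) - ((i₀ : ℕ) : ℝ)) ''
      {z : ℂ | Polynomial.aeval z (p (other i₀)) = 0} with hBaddef
  have hBadfin : Bad.Finite := by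
    apply Set.finite_iUnion
    intro i₀
    apply Set.Finite.image
    have hpne : (p (other i₀)).map (algebraMap ℝ ℂ) ≠ 0 := by
      apply Polynomial.map_ne_zero
      exact (hmon (other i₀)).ne_zero
    have heq : {z : ℂ | Polynomial.aeval z (p (other i₀)) = 0}
        = {z : ℂ | ((p (other i₀)).map (algebraMap ℝ ℂ)).IsRoot z} := by
      ext z
      simp [Polynomial.IsRoot, Polynomial.aeval_def, Polynomial.eval_map]
    rw [heq]
    exact Polynomial.finite_setOf_isRoot hpne
  obtain ⟨M, hM⟩ := hBadfin.bddAbove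
  -- choose t
  have h1 : Tendsto (fun t : ℝ => ((1 + m / t) ^ d) ^ 2 - 1) atTop (nhds 0) := by
    have h2 : Tendsto (fun t : ℝ => m / t) atTop (nhds 0) :=
      Tendsto.div_atTop tendsto_const_nhds tendsto_id
    have h3 : Tendsto (fun t : ℝ => 1 + m / t) atTop (nhds 1) := by
      have hone : Tendsto (fun _ : ℝ => (1:ℝ)) atTop (nhds 1) := tendsto_const_nhds
      simpa using hone.add h2
    have h4 := (h3.pow d).pow 2
    have hone2 : Tendsto (fun _ : ℝ => (1:ℝ)) atTop (nhds 1) := tendsto_const_nhds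
    have h5 := h4.sub hone2
    simpa using h5
  obtain ⟨t, ht⟩ := ((h1.eventually (gt_mem_nhds hε)).and
    (eventually_ge_atTop (max 1 (M + 1)))).exists
  obtain ⟨htε, htM⟩ := ht
  have ht1 : (1:ℝ) ≤ t := le_trans (le_max_left _ _) htM
  have ht0 : (0:ℝ) < t := lt_of_lt_of_le one_pos ht1
  have htBad : t ∉ Bad := by
    intro htB
    have := hM htB
    have : M + 1 ≤ M := le_trans (le_max_right 1 (M+1)) (le_trans htM this)
    linarith
  -- goodness
  have hgood : ∀ i₀ : Fin (m + 1), ∀ z : ℂ, z ^ 2 + ((t : ℂ) + ((i₀ : ℕ) : ℂ)) = 0 →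
      Polynomial.aeval z (p (other i₀)) ≠ 0 := by
    intro i₀ z hz hzero
    apply htBad
    rw [hBaddef]
    apply Set.mem_iUnion.mpr
    refine ⟨i₀, z, hzero, ?_⟩
    show -((z ^ 2).re) - ((i₀ : ℕ) : ℝ) = t
    have hz2 : z ^ 2 = -((t : ℂ) + ((i₀ : ℕ) : ℂ)) := by linear_combination hz
    rw [hz2]
    simp only [Complex.neg_re, Complex.add_re, Complex.ofReal_re, Complex.natCast_re]
    ring
  -- the perturbed tuple
  set q : Fin (m + 1) → Polynomial ℝ :=
    fun i => p i * (Polynomial.X ^ 2 + Polynomial.C (t + (i : ℕ))) ^ d with hqdef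
  have hXCmon : ∀ i : Fin (m + 1), (Polynomial.X ^ 2 + Polynomial.C (t + ((i : ℕ) : ℝ))).Monic :=
    fun i => Polynomial.monic_X_pow_add (lt_of_le_of_lt (Polynomial.degree_C_le) (by norm_num))
  have hmon' : ∀ i, (q i).Monic := fun i => (hmon i).mul ((hXCmon i).pow d)
  have hdeg' : ∀ i, (q i).natDegree = n := by
    intro i
    rw [hqdef]
    simp only
    rw [Polynomial.natDegree_mul (hmon i).ne_zero (((hXCmon i).pow d).ne_zero),
      Polynomial.natDegree_pow, hdeg i]
    have h2 : (Polynomial.X ^ 2 + Polynomial.C (t + ((i : ℕ) : ℝ))).natDegree = 2 := by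
      compute_degree!
    rw [h2]
    omega
  have hqe : ∀ (x : ℝ) i, Polynomial.eval x (q i)
      = Polynomial.eval x (p i) * (x ^ 2 + (t + (i : ℕ))) ^ d := by
    intro x i
    rw [hqdef]
    simp
  have hbasepos : ∀ (x : ℝ) (i : Fin (m + 1)), (0:ℝ) < x ^ 2 + (t + (i : ℕ)) := by
    intro x i
    have : (0:ℝ) < t + (i : ℕ) := add_pos_of_pos_of_nonneg ht0 (Nat.cast_nonneg _)
    nlinarith [sq_nonneg x]
  have hnz : ∀ x : ℝ, (fun i => Polynomial.eval x (q i)) ≠ 0 := by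
    intro x h0
    obtain ⟨hx, _⟩ := hval x
    obtain ⟨i, hi⟩ := Function.ne_iff.mp hx
    simp only [Pi.zero_apply] at hi
    have := congrFun h0 i
    simp only [Pi.zero_apply] at this
    rw [hqe x i] at this
    exact hi (by
      rcases mul_eq_zero.mp this with h | h
      · exact h
      · exact absurd h (pow_ne_zero _ (hbasepos x i).ne'))
  have hroot' : ∀ z : ℂ, ∃ i, Polynomial.aeval z (q i) ≠ 0 := by
    intro z
    obtain ⟨i₀, hi₀⟩ := hroot z
    have haeq : ∀ i : Fin (m + 1), Polynomial.aeval z (q i)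
        = Polynomial.aeval z (p i) * (z ^ 2 + ((t : ℂ) + ((i : ℕ) : ℂ))) ^ d := by
      intro i
      rw [hqdef]
      simp [Complex.ofReal_add]
    by_cases hc : z ^ 2 + ((t : ℂ) + ((i₀ : ℕ) : ℂ)) = 0
    · refine ⟨other i₀, ?_⟩
      rw [haeq]
      apply mul_ne_zero (hgood i₀ z hc)
      apply pow_ne_zero
      have hne : ((other i₀ : ℕ) : ℂ) - ((i₀ : ℕ) : ℂ) ≠ 0 := by
        rw [sub_ne_zero]
        exact_mod_cast fun h => (hother i₀) (Fin.ext (Nat.cast_injective h))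
      intro h0
      apply hne
      linear_combination h0 - hc
    · exact ⟨i₀, by rw [haeq]; exact mul_ne_zero hi₀ (pow_ne_zero _ hc)⟩
  -- the loop
  have hcont := continuous_polyLoopFun hnz hmon' hdeg'
  set g : {f : C(OnePoint ℝ, RP m) // f ∞ = basept m} := ⟨⟨polyLoopFun q hnz, hcont⟩, rfl⟩
    with hgdef
  refine ⟨g, ⟨q, hmon', hdeg', hroot', fun x => ⟨hnz x, rfl⟩⟩, ?_⟩
  -- the distance estimate
  set R : ℝ := (1 + m / t) ^ d with hRdef
  have hR1 : (1:ℝ) ≤ R := by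
    apply one_le_pow₀
    have : (0:ℝ) ≤ m / t := by positivity
    linarith
  have hR2 : (0:ℝ) ≤ R ^ 2 - 1 := by nlinarith
  have hdistle : dist f.1 g.1 ≤ R ^ 2 - 1 := by
    rw [ContinuousMap.dist_le hR2]
    intro z
    rcases z with _ | x
    · show dist (f.1 ∞) (g.1 ∞) ≤ _
      rw [f.2, g.2]
      simpa using hR2
    · show dist (f.1 (x : OnePoint ℝ)) (g.1 (x : OnePoint ℝ)) ≤ _
      obtain ⟨hx, heq⟩ := hval x
      rw [heq]
      have hgx : g.1 (x : OnePoint ℝ)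
          = Projectivization.mk ℝ (fun i => Polynomial.eval x (q i)) (hnz x) := rfl
      rw [hgx]
      rw [rp_dist, phi_mk, phi_mk]
      set b : Fin (m + 1) → ℝ := fun i => (x ^ 2 + (t + (i : ℕ))) ^ d with hbdef
      have hQP : (fun i => Polynomial.eval x (q i)) = fun i => Polynomial.eval x (p i) * b i := by
        funext i
        rw [hqe x i]
      rw [hQP, dist_comm]
      set B : ℝ := (x ^ 2 + t) ^ d with hBdef
      have hBpos : 0 < B := by
        rw [hBdef]
        apply pow_pos
        nlinarith [sq_nonneg x]
      have hxt : (0:ℝ) < x ^ 2 + t := by nlinarith [sq_nonneg x]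
      apply Phi_dist_le hx hBpos hR1
      · intro l
        rw [hbdef, hBdef]
        apply pow_le_pow_left₀ hxt.le
        have : (0:ℝ) ≤ (l : ℕ) := Nat.cast_nonneg _
        linarith
      · intro l
        rw [hbdef, hBdef, ← mul_pow]
        apply pow_le_pow_left₀ (hbasepos x l).le
        have hlm : ((l : ℕ) : ℝ) ≤ m := by
          exact_mod_cast Fin.is_le l
        have hkey : ((m : ℝ)) * t ≤ (x ^ 2 + t) * m := by nlinarith [sq_nonneg x, Nat.cast_nonneg (α := ℝ) m]
        have : (x ^ 2 + t) * (1 + (m : ℝ) / t) = x ^ 2 + t + (x ^ 2 + t) * m / t := by ring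
        rw [this]
        have h6 : (m : ℝ) ≤ (x ^ 2 + t) * m / t := by
          rw [le_div_iff₀ ht0]
          nlinarith
        linarith
  calc dist f g = dist f.1 g.1 := Subtype.dist_eq f g
  _ ≤ R ^ 2 - 1 := hdistle
  _ < ε := htε

open Finset in
lemma sum_Phi_sq {m : ℕ} {v : Fin (m + 1) → ℝ} (hv : v ≠ 0) :
    ∑ i, ∑ j, (Phi v i j) ^ 2 = 1 := by
  have hS := sumSq_pos hv
  have h1 : ∑ i, ∑ j, (Phi v i j) ^ 2
      = (∑ i, ∑ j, (v i) ^ 2 * (v j) ^ 2) / (sumSq v) ^ 2 := by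
    rw [Finset.sum_div]
    apply Finset.sum_congr rfl
    intro i _
    rw [Finset.sum_div]
    apply Finset.sum_congr rfl
    intro j _
    rw [Phi, div_pow]
    congr 1
    ring
  rw [h1, ← Finset.sum_mul_sum]
  have h2 : (∑ i, (v i) ^ 2) = sumSq v := rfl
  rw [h2, ← sq]
  exact div_self (pow_ne_zero _ hS.ne')

open Finset in
lemma sum_Phi_mul {m : ℕ} {v w : Fin (m + 1) → ℝ} (hv : v ≠ 0) (hw : w ≠ 0)
    (h : ∑ i, v i * w i = 0) : ∑ i, ∑ j, Phi v i j * Phi w i j = 0 := by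
  have hSv := sumSq_pos hv
  have hSw := sumSq_pos hw
  have h1 : ∑ i, ∑ j, Phi v i j * Phi w i j
      = (∑ i, ∑ j, (v i * w i) * (v j * w j)) / (sumSq v * sumSq w) := by
    rw [Finset.sum_div]
    apply Finset.sum_congr rfl
    intro i _
    rw [Finset.sum_div]
    apply Finset.sum_congr rfl
    intro j _
    rw [Phi, Phi, div_mul_div_comm]
    congr 1
    ring
  rw [h1, ← Finset.sum_mul_sum, h, zero_mul, zero_div]

open Finset in
lemma sum_sq_Phi_sub {m : ℕ} {v w : Fin (m + 1) → ℝ} (hv : v ≠ 0) (hw : w ≠ 0)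
    (h : ∑ i, v i * w i = 0) :
    ∑ i, ∑ j, (Phi v i j - Phi w i j) ^ 2 = 2 := by
  have key : ∀ i j : Fin (m + 1), (Phi v i j - Phi w i j) ^ 2
      = (Phi v i j) ^ 2 + (Phi w i j) ^ 2 - 2 * (Phi v i j * Phi w i j) := by
    intro i j
    ring
  have hsum : ∑ i, ∑ j, (Phi v i j - Phi w i j) ^ 2
      = (∑ i, ∑ j, (Phi v i j) ^ 2) + (∑ i, ∑ j, (Phi w i j) ^ 2)
        - 2 * (∑ i, ∑ j, Phi v i j * Phi w i j) := by
    rw [Finset.mul_sum, ← Finset.sum_add_distrib, ← Finset.sum_sub_distrib]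
    apply Finset.sum_congr rfl
    intro i _
    rw [Finset.mul_sum, ← Finset.sum_add_distrib, ← Finset.sum_sub_distrib]
    apply Finset.sum_congr rfl
    intro j _
    exact key i j
  rw [hsum, sum_Phi_sq hv, sum_Phi_sq hw, sum_Phi_mul hv hw h]
  ring

open Finset in
lemma exists_big_entry {m : ℕ} {A B : Fin (m + 1) → Fin (m + 1) → ℝ}
    (h : ∑ i, ∑ j, (A i j - B i j) ^ 2 = 2) :
    ∃ i j, 2 / ((m : ℝ) + 1) ^ 2 ≤ (A i j - B i j) ^ 2 := by
  by_contra h0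
  push_neg at h0
  have hcst : ∀ c : ℝ, (∑ _i : Fin (m + 1), c) = ((m : ℝ) + 1) * c := by
    intro c
    rw [Finset.sum_const, Finset.card_univ, Fintype.card_fin, nsmul_eq_mul]
    push_cast
    ring
  have hlt : ∑ i, ∑ j, (A i j - B i j) ^ 2
      < ∑ _i : Fin (m + 1), (((m : ℝ) + 1) * (2 / ((m : ℝ) + 1) ^ 2)) := by
    apply Finset.sum_lt_sum_of_nonempty Finset.univ_nonempty
    intro i _
    calc ∑ j, (A i j - B i j) ^ 2
        < ∑ _j : Fin (m + 1), (2 / ((m : ℝ) + 1) ^ 2) :=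
          Finset.sum_lt_sum_of_nonempty Finset.univ_nonempty (fun j _ => h0 i j)
    _ = ((m : ℝ) + 1) * (2 / ((m : ℝ) + 1) ^ 2) := hcst _
  rw [h, hcst] at hlt
  have hm1 : ((m : ℝ) + 1) ≠ 0 := by positivity
  have : ((m : ℝ) + 1) * (((m : ℝ) + 1) * (2 / ((m : ℝ) + 1) ^ 2)) = 2 := by
    field_simp
  rw [this] at hlt
  exact lt_irrefl _ hlt

open Polynomial in
lemma aeval_real_coe (r : ℝ) (q : Polynomial ℝ) :
    Polynomial.aeval (r : ℂ) q = ((Polynomial.eval r q : ℝ) : ℂ) := by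
  rw [← Complex.coe_algebraMap, Polynomial.aeval_algebraMap_apply_eq_algebraMap_eval]

open Polynomial in
lemma gcd_quot_no_common_root {m : ℕ} (U : Fin (m + 1) → Polynomial ℝ) (i₀ : Fin (m + 1))
    (hU : U i₀ ≠ 0) :
    ∃ (g0 : Polynomial ℝ) (v : Fin (m + 1) → Polynomial ℝ), g0 ≠ 0 ∧
      (∀ i, U i = g0 * v i) ∧ (∀ z : ℂ, ∃ i, Polynomial.aeval z (v i) ≠ 0) := by
  classical
  set g0 : Polynomial ℝ := Finset.univ.gcd U with hg0def
  have hg0dvd : ∀ i, g0 ∣ U i := fun i => Finset.gcd_dvd (Finset.mem_univ i)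
  have hg0ne : g0 ≠ 0 := by
    rw [hg0def, Ne, Finset.gcd_eq_zero_iff]
    push_neg
    exact ⟨i₀, Finset.mem_univ i₀, hU⟩
  set v : Fin (m + 1) → Polynomial ℝ := fun i => U i / g0 with hvdef
  have hUv : ∀ i, U i = g0 * v i := fun i =>
    (EuclideanDomain.mul_div_cancel' hg0ne (hg0dvd i)).symm
  refine ⟨g0, v, hg0ne, hUv, ?_⟩
  intro z
  by_contra h
  push_neg at h
  -- construct a real polynomial w dividing all v i, with positive degree
  have hw : ∃ w : Polynomial ℝ, 0 < w.natDegree ∧ ∀ i, w ∣ v i := by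
    rcases eq_or_ne z.im 0 with him | him
    · refine ⟨Polynomial.X - Polynomial.C z.re, ?_, ?_⟩
      · simp [Polynomial.natDegree_X_sub_C]
      · intro i
        rw [Polynomial.dvd_iff_isRoot, Polynomial.IsRoot]
        have hz : z = ((z.re : ℝ) : ℂ) := Complex.ext rfl (by simp [him])
        have := h i
        rw [hz, aeval_real_coe] at this
        exact_mod_cast this
    · set w : Polynomial ℝ := Polynomial.X ^ 2 - Polynomial.C (2 * z.re) * Polynomial.X
        + Polynomial.C (z.re ^ 2 + z.im ^ 2) with hwdef
      have hwmap : w.map (algebraMap ℝ ℂ)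
          = (Polynomial.X - Polynomial.C z) * (Polynomial.X - Polynomial.C (starRingEnd ℂ z)) := by
        have hrhs : (Polynomial.X - Polynomial.C z) * (Polynomial.X - Polynomial.C (starRingEnd ℂ z))
            = Polynomial.X ^ 2 - Polynomial.C (z + starRingEnd ℂ z) * Polynomial.X
              + Polynomial.C (z * starRingEnd ℂ z) := by
          rw [Polynomial.C_add, Polynomial.C_mul]
          ring
        rw [hrhs, Complex.add_conj, Complex.mul_conj]
        rw [hwdef]
        simp only [Polynomial.map_add, Polynomial.map_sub, Polynomial.map_pow,
          Polynomial.map_mul, Polynomial.map_X, Polynomial.map_C, Complex.coe_algebraMap]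
        congr 2
        rw [Complex.normSq_apply]
        push_cast
        ring
      refine ⟨w, ?_, ?_⟩
      · have : w.natDegree = 2 := by
          rw [hwdef]
          compute_degree!
        omega
      · intro i
        rw [← Polynomial.map_dvd_map' (algebraMap ℝ ℂ), hwmap]
        have h1 : (Polynomial.X - Polynomial.C z) ∣ (v i).map (algebraMap ℝ ℂ) := by
          rw [Polynomial.dvd_iff_isRoot, Polynomial.IsRoot, Polynomial.eval_map,
            ← Polynomial.aeval_def]
          exact h i
        have h2 : (Polynomial.X - Polynomial.C (starRingEnd ℂ z)) ∣
            (v i).map (algebraMap ℝ ℂ) := by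
          rw [Polynomial.dvd_iff_isRoot, Polynomial.IsRoot, Polynomial.eval_map,
            ← Polynomial.aeval_def]
          rw [Polynomial.aeval_conj]
          simp [h i]
        have hcop : IsCoprime (Polynomial.X - Polynomial.C z)
            (Polynomial.X - Polynomial.C (starRingEnd ℂ z)) := by
          apply Polynomial.isCoprime_X_sub_C_of_isUnit_sub
          apply IsUnit.mk0
          rw [sub_ne_zero]
          intro heq
          exact him (Complex.conj_eq_iff_im.mp heq.symm)
        exact IsCoprime.mul_dvd hcop h1 h2
  obtain ⟨w, hwdeg, hwdvd⟩ := hw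
  have hwg : ∀ i, g0 * w ∣ U i := by
    intro i
    rw [hUv i]
    exact mul_dvd_mul_left g0 (hwdvd i)
  have hdvdg : g0 * w ∣ g0 := by
    rw [hg0def]
    exact Finset.dvd_gcd fun i _ => hwg i
  have hwne : w ≠ 0 := fun h0 => by simp [h0] at hwdeg
  have hle := Polynomial.natDegree_le_of_dvd hdvdg hg0ne
  rw [Polynomial.natDegree_mul hg0ne hwne] at hle
  omega

open Filter Polynomial in
lemma closure_rrat'_subset {n m : ℕ} (hn : 1 ≤ n) (hm : 1 ≤ m)
    {f : {f : C(OnePoint ℝ, RP m) // f ∞ = basept m}} (hf : f ∈ closure (RRat' n m)) :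
    ∃ k, k ≤ n ∧ k % 2 = n % 2 ∧ f ∈ RRat' k m := by
  classical
  letI := rpMS m
  -- extract an approximating sequence
  have hseq : ∀ j : ℕ, ∃ g, g ∈ RRat' n m ∧ dist f g < 1 / ((j : ℝ) + 1) := fun j => by
    obtain ⟨g, hg1, hg2⟩ := Metric.mem_closure_iff.mp hf (1 / ((j : ℝ) + 1)) (by positivity)
    exact ⟨g, hg1, hg2⟩
  choose G hGmem hGdist using hseq
  choose p hpm hpd hpr hpv using hGmem
  -- coefficient vectors
  set c : ℕ → Fin (m + 1) → Fin (n + 1) → ℝ := fun j i l => (p j i).coeff l with hcdef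
  have hc1 : ∀ j, c j ≠ 0 := by
    intro j h0
    have h1 := congrFun (congrFun h0 0) ⟨n, Nat.lt_succ_self n⟩
    simp only [Pi.zero_apply, hcdef] at h1
    have h2 : (p j 0).coeff ((p j 0).natDegree) = 1 := (hpm j 0).coeff_natDegree
    rw [hpd j 0] at h2
    rw [h1] at h2
    exact one_ne_zero h2.symm
  set N : ℕ → ℝ := fun j => ‖c j‖ with hNdef
  have hN : ∀ j, 0 < N j := fun j => norm_pos_iff.mpr (hc1 j)
  set u : ℕ → Fin (m + 1) → Fin (n + 1) → ℝ := fun j => (N j)⁻¹ • c j with hudef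
  have husph : ∀ j, u j ∈ Metric.sphere (0 : Fin (m + 1) → Fin (n + 1) → ℝ) 1 := by
    intro j
    rw [mem_sphere_iff_norm, sub_zero, hudef]
    simp only
    rw [norm_smul, norm_inv, Real.norm_eq_abs, abs_of_pos (hN j)]
    exact inv_mul_cancel₀ (hN j).ne'
  obtain ⟨a, hasph, φ, hφmono, hφtend⟩ :=
    (isCompact_sphere (0 : Fin (m + 1) → Fin (n + 1) → ℝ) 1).tendsto_subseq husph
  -- the limit polynomials
  set U : Fin (m + 1) → Polynomial ℝ :=
    fun i => ∑ l : Fin (n + 1), Polynomial.C (a i l) * Polynomial.X ^ (l : ℕ) with hUdef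
  have hUc2 : ∀ i r, n < r → (U i).coeff r = 0 := by
    intro i r hr
    rw [hUdef]
    simp only
    rw [Polynomial.finset_sum_coeff]
    apply Finset.sum_eq_zero
    intro l _
    rw [Polynomial.coeff_C_mul, Polynomial.coeff_X_pow, if_neg (by omega), mul_zero]
  have hUdeg : ∀ i, (U i).natDegree ≤ n := fun i =>
    Polynomial.natDegree_le_iff_coeff_eq_zero.mpr (fun r hr => hUc2 i r hr)
  have hWeval : ∀ (x : ℝ) i, Polynomial.eval x (U i) = ∑ l : Fin (n + 1), a i l * x ^ (l : ℕ) := by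
    intro x i
    rw [hUdef]
    simp only
    rw [Polynomial.eval_finset_sum]
    apply Finset.sum_congr rfl
    intro l _
    simp
  have hUcoeff : ∀ i (l : Fin (n + 1)), (U i).coeff (l : ℕ) = a i l := by
    intro i l
    rw [hUdef]
    simp only
    rw [Polynomial.finset_sum_coeff]
    have : ∀ l' : Fin (n + 1),
        (Polynomial.C (a i l') * Polynomial.X ^ (l' : ℕ)).coeff (l : ℕ)
          = if l' = l then a i l' else 0 := by
      intro l'
      rw [Polynomial.coeff_C_mul, Polynomial.coeff_X_pow]
      by_cases hll : l' = l
      · rw [if_pos hll, if_pos (by rw [hll]), mul_one]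
      · rw [if_neg hll, if_neg (fun hc => hll (Fin.ext (by omega))), mul_zero]
    rw [Finset.sum_congr rfl fun l' _ => this l']
    rw [Finset.sum_ite_eq' Finset.univ l (fun l' => a i l')]
    simp
  -- evaluation convergence
  have hVlim : ∀ x : ℝ, Tendsto (fun j => fun i => (N (φ j))⁻¹ * Polynomial.eval x (p (φ j) i))
      atTop (nhds (fun i => Polynomial.eval x (U i))) := by
    intro x
    rw [tendsto_pi_nhds]
    intro i
    have hVj : ∀ j, (N (φ j))⁻¹ * Polynomial.eval x (p (φ j) i)
        = ∑ l : Fin (n + 1), u (φ j) i l * x ^ (l : ℕ) := by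
      intro j
      rw [Polynomial.eval_eq_sum_range'
        (lt_of_le_of_lt (le_of_eq (hpd (φ j) i)) (Nat.lt_succ_self n)) x]
      rw [Finset.mul_sum,
        ← Fin.sum_univ_eq_sum_range (fun r => (N (φ j))⁻¹ * ((p (φ j) i).coeff r * x ^ r))]
      apply Finset.sum_congr rfl
      intro l _
      simp only [hudef, hcdef, Pi.smul_apply, smul_eq_mul]
      ring
    have hW : Polynomial.eval x (U i) = ∑ l : Fin (n + 1), a i l * x ^ (l : ℕ) := hWeval x i
    rw [hW]
    refine Tendsto.congr (fun j => (hVj j).symm) ?_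
    apply tendsto_finset_sum
    intro l _
    have hcoord : Tendsto (fun j => u (φ j) i l) atTop (nhds (a i l)) :=
      (tendsto_pi_nhds.mp ((tendsto_pi_nhds.mp hφtend) i)) l
    exact hcoord.mul_const _
  -- key pointwise identity
  have hkey : ∀ (x : ℝ) (hWnz : (fun i => Polynomial.eval x (U i)) ≠ 0),
      f.1 (x : OnePoint ℝ) = Projectivization.mk ℝ _ hWnz := by
    intro x hWnz
    set W : Fin (m + 1) → ℝ := fun i => Polynomial.eval x (U i) with hWdef
    set V : ℕ → Fin (m + 1) → ℝ :=
      fun j => fun i => (N (φ j))⁻¹ * Polynomial.eval x (p (φ j) i) with hVdef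
    have hV : Tendsto V atTop (nhds W) := hVlim x
    have hop : {v : Fin (m + 1) → ℝ | v ≠ 0} ∈ nhds W := isOpen_ne.mem_nhds hWnz
    have hev : ∀ᶠ j in atTop, V j ≠ 0 := hV.eventually hop
    -- G (φ j) converges to f pointwise
    have hGx : Tendsto (fun j => (G (φ j)).1 (x : OnePoint ℝ)) atTop
        (nhds (f.1 (x : OnePoint ℝ))) := by
      rw [tendsto_iff_dist_tendsto_zero]
      apply squeeze_zero (fun j => dist_nonneg)
        (g := fun j : ℕ => 1 / ((j : ℝ) + 1))
      · intro j
        calc dist ((G (φ j)).1 (x : OnePoint ℝ)) (f.1 (x : OnePoint ℝ))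
            ≤ dist (G (φ j)).1 f.1 := ContinuousMap.dist_apply_le_dist _
        _ = dist f (G (φ j)) := by rw [← Subtype.dist_eq, dist_comm]
        _ ≤ 1 / ((φ j : ℝ) + 1) := (hGdist (φ j)).le
        _ ≤ 1 / ((j : ℝ) + 1) := by
            have h10 : j ≤ φ j := hφmono.le_apply
            have h11 : ((j : ℝ)) ≤ ((φ j : ℝ)) := Nat.cast_le.mpr h10
            exact div_le_div_of_nonneg_left one_pos.le (by positivity) (by linarith)
      · exact tendsto_one_div_add_atTop_nhds_zero_nat
    -- subtype sequence
    set Vs : ℕ → {y : Fin (m + 1) → ℝ // y ≠ 0} := fun j =>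
      if h : V j = 0 then ⟨W, hWnz⟩ else ⟨V j, h⟩ with hVsdef
    have hVs : Tendsto (fun j => (Vs j : Fin (m + 1) → ℝ)) atTop (nhds W) := by
      apply Tendsto.congr' ?_ hV
      filter_upwards [hev] with j hj
      rw [hVsdef]
      simp only [dif_neg hj]
    have hVs2 : Tendsto Vs atTop (nhds ⟨W, hWnz⟩) := tendsto_subtype_rng.mpr hVs
    have hcmk : Continuous (fun y : {y : Fin (m + 1) → ℝ // y ≠ 0} =>
        Projectivization.mk ℝ y.1 y.2) := continuous_mk continuous_subtype_val _
    have hmk : Tendsto (fun j => Projectivization.mk ℝ (Vs j : Fin (m + 1) → ℝ) (Vs j).2)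
        atTop (nhds (Projectivization.mk ℝ W hWnz)) := (hcmk.tendsto _).comp hVs2
    have hGmk : ∀ᶠ j in atTop, (G (φ j)).1 (x : OnePoint ℝ)
        = Projectivization.mk ℝ (Vs j : Fin (m + 1) → ℝ) (Vs j).2 := by
      filter_upwards [hev] with j hj
      obtain ⟨hx, heq⟩ := hpv (φ j) x
      rw [heq]
      rw [hVsdef]
      simp only [dif_neg hj]
      have hVform : V j = fun i => (N (φ j))⁻¹ * Polynomial.eval x (p (φ j) i) := rfl
      exact (mk_mul hx hj).symm
    have hGmk2 : Tendsto (fun j => (G (φ j)).1 (x : OnePoint ℝ)) atTop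
        (nhds (Projectivization.mk ℝ W hWnz)) := Tendsto.congr' (by
          filter_upwards [hGmk] with j hj; exact hj.symm) hmk
    exact tendsto_nhds_unique hGx hGmk2
  -- some U i is nonzero
  have haNe : a ≠ 0 := by
    intro h0
    rw [mem_sphere_iff_norm, sub_zero, h0] at hasph
    simp at hasph
  obtain ⟨istar, histar⟩ : ∃ i, U i ≠ 0 := by
    obtain ⟨i, hi⟩ := Function.ne_iff.mp haNe
    have hi' : a i ≠ 0 := by simpa using hi
    obtain ⟨l, hl⟩ := Function.ne_iff.mp hi'
    refine ⟨i, fun h0 => ?_⟩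
    have hcf := hUcoeff i l
    rw [h0] at hcf
    simp only [Polynomial.coeff_zero] at hcf
    have hl' : a i l ≠ 0 := by simpa using hl
    exact hl' hcf.symm
  -- gcd
  obtain ⟨g0, v, hg0ne, hUv, hvroot⟩ := gcd_quot_no_common_root U istar histar
  have hvnz : ∀ x : ℝ, (fun i => Polynomial.eval x (v i)) ≠ 0 := by
    intro x h0
    obtain ⟨i, hi⟩ := hvroot (x : ℂ)
    apply hi
    rw [aeval_real_coe]
    have := congrFun h0 i
    simp only [Pi.zero_apply] at this
    rw [this]
    exact Complex.ofReal_zero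
  -- f equals the loop of v everywhere
  have hfv : ∀ x : ℝ, f.1 (x : OnePoint ℝ)
      = Projectivization.mk ℝ (fun i => Polynomial.eval x (v i)) (hvnz x) := by
    have h1c : Continuous (fun x : ℝ => f.1 (x : OnePoint ℝ)) :=
      f.1.continuous.comp OnePoint.continuous_coe
    have h2c : Continuous (fun x : ℝ =>
        Projectivization.mk ℝ (fun i => Polynomial.eval x (v i)) (hvnz x)) :=
      continuous_mk (continuous_pi fun i => (v i).continuous) _
    have hsd : Dense {x : ℝ | Polynomial.eval x (U istar) ≠ 0} := by
      have hfin : Set.Finite {x : ℝ | (U istar).IsRoot x} :=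
        Polynomial.finite_setOf_isRoot histar
      have : {x : ℝ | Polynomial.eval x (U istar) ≠ 0} = {x : ℝ | (U istar).IsRoot x}ᶜ := by
        ext x
        simp [Polynomial.IsRoot]
      rw [this]
      exact hfin.countable.dense_compl ℝ
    have heqon : Set.EqOn (fun x : ℝ => f.1 (x : OnePoint ℝ))
        (fun x : ℝ => Projectivization.mk ℝ (fun i => Polynomial.eval x (v i)) (hvnz x))
        {x : ℝ | Polynomial.eval x (U istar) ≠ 0} := by
      intro x hx
      have hUnz : (fun i => Polynomial.eval x (U i)) ≠ 0 := by
        intro h0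
        exact hx (by simpa using congrFun h0 istar)
      have h3 := hkey x hUnz
      simp only
      rw [h3]
      apply (Projectivization.mk_eq_mk_iff' ℝ _ _ _ _).mpr
      refine ⟨Polynomial.eval x g0, funext fun i => ?_⟩
      simp only [Pi.smul_apply, smul_eq_mul]
      rw [hUv i, Polynomial.eval_mul]
    have := Continuous.ext_on hsd h1c h2c heqon
    exact fun x => congrFun this x
  -- identify degrees via the basepoint
  set kk : ℕ := Finset.univ.sup (fun i => (v i).natDegree) with hkkdef
  have hvd : ∀ i, (v i).natDegree ≤ kk := fun i => Finset.le_sup (f := fun i => (v i).natDegree) (Finset.mem_univ i)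
  set w0 : Fin (m + 1) → ℝ := fun i => (v i).coeff kk with hw0def
  have hw0 : w0 ≠ 0 := by
    by_cases hkk0 : kk = 0
    · intro h0
      apply hvnz 0
      funext i
      have := congrFun h0 i
      simp only [hw0def, Pi.zero_apply] at this ⊢
      rw [← Polynomial.coeff_zero_eq_eval_zero]
      rw [← hkk0]
      exact this
    · obtain ⟨i₀, _, hi₀⟩ := Finset.exists_mem_eq_sup Finset.univ
        ⟨0, Finset.mem_univ 0⟩ (fun i => (v i).natDegree)
      have hvne : v i₀ ≠ 0 := by
        intro h0
        rw [h0] at hi₀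
        simp only [Polynomial.natDegree_zero] at hi₀
        exact hkk0 (hkkdef ▸ hi₀)
      intro h0
      have := congrFun h0 i₀
      simp only [hw0def, Pi.zero_apply] at this
      rw [hkkdef, hi₀] at this
      exact (Polynomial.leadingCoeff_ne_zero.mpr hvne) this
  have hlim1 : Tendsto (fun x : ℝ =>
      Projectivization.mk ℝ (fun i => Polynomial.eval x (v i)) (hvnz x)) (cocompact ℝ)
      (nhds (Projectivization.mk ℝ w0 hw0)) := tendsto_mk_eval hvd hw0 hvnz
  have hlim2 : Tendsto (fun x : ℝ =>
      Projectivization.mk ℝ (fun i => Polynomial.eval x (v i)) (hvnz x)) (cocompact ℝ)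
      (nhds (basept m)) := by
    have h4 : Tendsto (fun x : ℝ => f.1 (x : OnePoint ℝ)) (cocompact ℝ) (nhds (basept m)) := by
      have := (f.1.continuous.tendsto ∞).comp tendsto_coe_infty
      rwa [f.2] at this
    exact Tendsto.congr (fun x => hfv x) h4
  haveI : NeBot (cocompact ℝ) := Filter.cocompact_neBot_iff.mpr inferInstance
  have hbeq : Projectivization.mk ℝ w0 hw0 = basept m := tendsto_nhds_unique hlim1 hlim2
  rw [basept, Projectivization.mk_eq_mk_iff] at hbeq
  obtain ⟨aa, haa⟩ := hbeq
  have hco : ∀ i, (v i).coeff kk = (aa : ℝ) := by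
    intro i
    have h12 := congrFun haa i
    simp only [Pi.smul_apply, Units.smul_def, smul_eq_mul, mul_one] at h12
    have h13 : w0 i = (aa : ℝ) := h12.symm
    rw [hw0def] at h13
    exact h13
  have haa0 : (aa : ℝ) ≠ 0 := aa.ne_zero
  have hvdeg : ∀ i, (v i).natDegree = kk ∧ v i ≠ 0 := by
    intro i
    have h5 : (v i).coeff kk ≠ 0 := by rw [hco i]; exact haa0
    have h6 : kk ≤ (v i).natDegree := Polynomial.le_natDegree_of_ne_zero h5
    exact ⟨le_antisymm (hvd i) h6, fun h0 => h5 (by rw [h0]; simp)⟩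
  have hkkn : kk ≤ n := by
    have hUiNe : U istar ≠ 0 := histar
    have h7 : (v istar).natDegree ≤ (U istar).natDegree :=
      Polynomial.natDegree_le_of_dvd ⟨g0, by rw [hUv istar]; ring⟩ hUiNe
    calc kk = (v istar).natDegree := ((hvdeg istar).1).symm
    _ ≤ (U istar).natDegree := h7
    _ ≤ n := hUdeg istar
  -- monic witnesses
  set P : Fin (m + 1) → Polynomial ℝ := fun i => Polynomial.C ((aa : ℝ)⁻¹) * v i with hPdef
  have hPm : ∀ i, (P i).Monic := by
    intro i
    have : (P i).leadingCoeff = 1 := by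
      rw [hPdef]
      simp only
      rw [Polynomial.leadingCoeff_mul, Polynomial.leadingCoeff_C]
      have : (v i).leadingCoeff = (aa : ℝ) := by
        rw [Polynomial.leadingCoeff, (hvdeg i).1, hco i]
      rw [this]
      exact inv_mul_cancel₀ haa0
    exact this
  have hPd : ∀ i, (P i).natDegree = kk := by
    intro i
    rw [hPdef]
    simp only
    rw [Polynomial.natDegree_mul (Polynomial.C_ne_zero.mpr (inv_ne_zero haa0)) (hvdeg i).2]
    rw [Polynomial.natDegree_C, (hvdeg i).1, zero_add]
  have hProot : ∀ z : ℂ, ∃ i, Polynomial.aeval z (P i) ≠ 0 := by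
    intro z
    obtain ⟨i, hi⟩ := hvroot z
    refine ⟨i, ?_⟩
    rw [hPdef]
    simp only [map_mul, Polynomial.aeval_C]
    exact mul_ne_zero (by
      simp only [Complex.coe_algebraMap, Ne, Complex.ofReal_eq_zero]
      exact inv_ne_zero haa0) hi
  have hPval : ∀ x : ℝ, ∃ hx : (fun i => (P i).eval x) ≠ 0,
      f.1 (x : OnePoint ℝ) = Projectivization.mk ℝ (fun i => (P i).eval x) hx := by
    intro x
    have hform : (fun i => (P i).eval x) = fun i => (aa : ℝ)⁻¹ * Polynomial.eval x (v i) := by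
      funext i
      rw [hPdef]
      simp
    have hx : (fun i => (P i).eval x) ≠ 0 := by
      rw [hform]
      intro h0
      apply hvnz x
      funext i
      have := congrFun h0 i
      simp only [Pi.zero_apply] at this ⊢
      rcases mul_eq_zero.mp this with h | h
      · exact absurd h (inv_ne_zero haa0)
      · exact h
    refine ⟨hx, ?_⟩
    rw [hfv x]
    have : Projectivization.mk ℝ (fun i => (P i).eval x) hx
        = Projectivization.mk ℝ (fun i => Polynomial.eval x (v i)) (hvnz x) := by
      apply (Projectivization.mk_eq_mk_iff' ℝ _ _ _ _).mpr
      exact ⟨(aa : ℝ)⁻¹, by rw [hform]; rfl⟩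
    rw [this]
  -- parity
  have hpar : kk % 2 = n % 2 := by
    obtain ⟨h, hhmem, hhdist⟩ := Metric.mem_closure_iff.mp hf (1 / ((m : ℝ) + 1)) (by positivity)
    obtain ⟨pp, hppm, hppd, hpproot, hppv⟩ := hhmem
    set σ : Polynomial ℝ := ∑ i, pp i * P i with hσdef
    have hmondeg : ∀ i : Fin (m + 1), (pp i * P i).natDegree = n + kk := by
      intro i
      rw [Polynomial.natDegree_mul (hppm i).ne_zero (hPm i).ne_zero, hppd i, hPd i]
    have hσc : σ.coeff (n + kk) = (m : ℝ) + 1 := by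
      rw [hσdef, Polynomial.finset_sum_coeff]
      have : ∀ i : Fin (m + 1), (pp i * P i).coeff (n + kk) = 1 := by
        intro i
        have := ((hppm i).mul (hPm i)).coeff_natDegree
        rwa [hmondeg i] at this
      rw [Finset.sum_congr rfl fun i _ => this i]
      rw [Finset.sum_const, Finset.card_univ, Fintype.card_fin, nsmul_eq_mul]
      push_cast
      ring
    have hσdeg : σ.natDegree = n + kk := by
      apply le_antisymm
      · rw [hσdef]
        exact Polynomial.natDegree_sum_le_of_forall_le _ _ fun i _ => le_of_eq (hmondeg i)
      · apply Polynomial.le_natDegree_of_ne_zero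
        rw [hσc]
        positivity
    have hσne : σ ≠ 0 := fun h0 => by
      have := hσc
      rw [h0] at this
      simp only [Polynomial.coeff_zero] at this
      have : ((m : ℝ) + 1) = 0 := this.symm
      nlinarith [Nat.cast_nonneg (α := ℝ) m]
    have hσnz : ∀ x : ℝ, Polynomial.eval x σ ≠ 0 := by
      intro x h0
      obtain ⟨hppx, hhx⟩ := hppv x
      obtain ⟨hPx, hfx⟩ := hPval x
      have hcross : ∑ i, (fun i => (pp i).eval x) i * (fun i => (P i).eval x) i = 0 := by
        rw [hσdef] at h0
        rw [Polynomial.eval_finset_sum] at h0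
        simpa [Polynomial.eval_mul] using h0
      have h2 := sum_sq_Phi_sub hppx hPx hcross
      obtain ⟨i, j, hij⟩ := exists_big_entry h2
      have habs : 1 / ((m : ℝ) + 1)
          < |Phi (fun i => (pp i).eval x) i j - Phi (fun i => (P i).eval x) i j| := by
        by_contra hc
        push_neg at hc
        have h8 : (Phi (fun i => (pp i).eval x) i j - Phi (fun i => (P i).eval x) i j) ^ 2
            ≤ (1 / ((m : ℝ) + 1)) ^ 2 := by
          rw [← sq_abs]
          apply pow_le_pow_left₀ (abs_nonneg _) hc
        have h9 : (0:ℝ) < ((m : ℝ) + 1) ^ 2 := by positivity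
        rw [div_pow] at h8
        have := le_trans hij h8
        rw [div_le_div_iff₀ h9 h9] at this
        nlinarith
      have hchain : |Phi (fun i => (pp i).eval x) i j - Phi (fun i => (P i).eval x) i j|
          ≤ 1 / ((m : ℝ) + 1) := by
        have e1 : Phi (fun i => (pp i).eval x) = phi m (h.1 (x : OnePoint ℝ)) := by
          rw [hhx, phi_mk]
        have e2 : Phi (fun i => (P i).eval x) = phi m (f.1 (x : OnePoint ℝ)) := by
          rw [hfx, phi_mk]
        rw [e1, e2]
        calc |phi m (h.1 (x : OnePoint ℝ)) i j - phi m (f.1 (x : OnePoint ℝ)) i j|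
            = dist (phi m (h.1 (x : OnePoint ℝ)) i j) (phi m (f.1 (x : OnePoint ℝ)) i j) :=
              (Real.dist_eq _ _).symm
        _ ≤ dist (phi m (h.1 (x : OnePoint ℝ)) i) (phi m (f.1 (x : OnePoint ℝ)) i) :=
              dist_le_pi_dist _ _ j
        _ ≤ dist (phi m (h.1 (x : OnePoint ℝ))) (phi m (f.1 (x : OnePoint ℝ))) :=
              dist_le_pi_dist _ _ i
        _ = dist (h.1 (x : OnePoint ℝ)) (f.1 (x : OnePoint ℝ)) := (rp_dist _ _).symm
        _ ≤ dist h.1 f.1 := ContinuousMap.dist_apply_le_dist _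
        _ = dist f h := by rw [← Subtype.dist_eq, dist_comm]
        _ ≤ 1 / ((m : ℝ) + 1) := hhdist.le
      exact absurd hchain (not_le.mpr habs)
    -- sign analysis
    have hdegpos : 0 < σ.degree := by
      rw [Polynomial.degree_eq_natDegree hσne, hσdeg]
      exact_mod_cast (by omega : 0 < n + kk)
    by_contra hnepar
    have hodd : (n + kk) % 2 = 1 := by omega
    have hlead : σ.leadingCoeff = (m : ℝ) + 1 := by
      rw [Polynomial.leadingCoeff, hσdeg]
      exact hσc
    have hpos : Tendsto (fun x => Polynomial.eval x σ) atTop atTop :=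
      Polynomial.tendsto_atTop_of_leadingCoeff_nonneg σ hdegpos (by rw [hlead]; positivity)
    obtain ⟨x₁, hx₁⟩ := (hpos.eventually_gt_atTop 0).exists
    set τ : Polynomial ℝ := σ.comp (-Polynomial.X) with hτdef
    have hτdeg : τ.natDegree = n + kk := by
      rw [hτdef, Polynomial.natDegree_comp]
      simp [hσdeg]
    have hτne : τ ≠ 0 := by
      intro h0
      rw [h0] at hτdeg
      simp only [Polynomial.natDegree_zero] at hτdeg
      omega
    have hτlead : τ.leadingCoeff = -((m : ℝ) + 1) := by
      rw [hτdef, Polynomial.leadingCoeff_comp (by simp)]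
      rw [hlead]
      have hlx : (-Polynomial.X : Polynomial ℝ).leadingCoeff = -1 := by simp
      rw [hlx, hσdeg, Odd.neg_one_pow (Nat.odd_iff.mpr hodd)]
      ring
    have hτdegpos : 0 < τ.degree := by
      rw [Polynomial.degree_eq_natDegree hτne, hτdeg]
      exact_mod_cast (by omega : 0 < n + kk)
    have hneg : Tendsto (fun x => Polynomial.eval x τ) atTop atBot :=
      Polynomial.tendsto_atBot_of_leadingCoeff_nonpos τ hτdegpos
        (by rw [hτlead]; nlinarith [Nat.cast_nonneg (α := ℝ) m])
    obtain ⟨x₂, hx₂⟩ := (hneg.eventually_lt_atBot 0).exists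
    have hx₂' : Polynomial.eval (-x₂) σ < 0 := by
      rw [hτdef] at hx₂
      rwa [Polynomial.eval_comp, Polynomial.eval_neg, Polynomial.eval_X] at hx₂
    have hcont : ContinuousOn (fun x => Polynomial.eval x σ) (Set.uIcc (-x₂) x₁) :=
      σ.continuous.continuousOn
    have h0mem : (0:ℝ) ∈ Set.uIcc (Polynomial.eval (-x₂) σ) (Polynomial.eval x₁ σ) :=
      Set.mem_uIcc.mpr (Or.inl ⟨hx₂'.le, hx₁.le⟩)
    obtain ⟨x₀, _, hx₀⟩ := intermediate_value_uIcc hcont h0mem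
    exact hσnz x₀ hx₀
  exact ⟨kk, hkkn, hpar, ⟨P, hPm, hPd, hProot, hPval⟩⟩
end RatAux


/-- For all `n ≥ 1` and `m ≥ 1`, `rat(n,m)` is the union of the sets `RRat(k,m)`
over all `k ≤ n` with `k ≡ n (mod 2)`. -/
theorem ratSet_eq_union_rrat (n m : ℕ) (hn : 1 ≤ n) (hm : 1 ≤ m) :
    ratSet n m = ⋃ k ∈ {k : ℕ | k ≤ n ∧ k % 2 = n % 2}, RRat k m := by
  have hRR : ∀ k : ℕ, RRat k m = RatAux.RRat' k m := fun k => rfl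
  ext f
  rw [ratSet]
  simp only [Set.mem_iUnion, Set.mem_setOf_eq, exists_prop]
  constructor
  · intro hf
    rw [hRR n] at hf
    obtain ⟨k, hk1, hk2, hk3⟩ := RatAux.closure_rrat'_subset hn hm hf
    rw [← hRR k] at hk3
    exact ⟨k, ⟨hk1, hk2⟩, hk3⟩
  · rintro ⟨k, ⟨hk1, hk2⟩, hk3⟩
    rw [hRR k] at hk3
    have := RatAux.rrat'_subset_closure hm hk1 hk2 hk3
    rwa [← hRR n] at this

end
end
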